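/- arXiv:1503.08512 — 8 statements merged into one kernel-verified Lean document; each statement's English description precedes it below -/
import Mathlib

section
/- Let a = (1+√5)/2 be the golden ratio and set a_n = ⌊a·n⌋ for positive integers n. Then for every positive integer n: a_{n+1} = a_n + 2 if n belongs to the Beatty sequence A = { ⌊a·k⌋ : k a positive integer }, and a_{n+1} = a_n + 1 otherwise. -/
/-- For `a = (1+√5)/2` the golden ratio and `aₙ = ⌊a·n⌋`, for every positive
integer `n`: `a_{n+1} = aₙ + 2` if `n` belongs to the Beatty sequence
`A = {⌊a·k⌋ : k ≥ 1}`, and `a_{n+1} = aₙ + 1` otherwise. -/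
theorem stmt4 (a : ℝ) (ha : a = (1 + Real.sqrt 5) / 2) (n : ℕ) (hn : 0 < n) :
    ((∃ k : ℕ, 0 < k ∧ (n : ℤ) = ⌊a * (k : ℝ)⌋) → ⌊a * ((n : ℝ) + 1)⌋ = ⌊a * (n : ℝ)⌋ + 2) ∧
    (¬ (∃ k : ℕ, 0 < k ∧ (n : ℤ) = ⌊a * (k : ℝ)⌋) → ⌊a * ((n : ℝ) + 1)⌋ = ⌊a * (n : ℝ)⌋ + 1) := by
  have hs5 : Real.sqrt 5 ^ 2 = 5 := Real.sq_sqrt (by norm_num)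
  have hs5pos : 0 ≤ Real.sqrt 5 := Real.sqrt_nonneg 5
  have hsq : a * a = a + 1 := by rw [ha]; nlinarith [hs5]
  have ha1 : 1 < a := by
    rw [ha]; nlinarith [hs5]
  have ha2 : a < 2 := by
    rw [ha]; nlinarith [hs5]
  have hia : Irrational a := by
    rw [ha]
    have h5 : Irrational (Real.sqrt 5) := (by norm_num : Nat.Prime 5).irrational_sqrt
    have : Irrational (1 + Real.sqrt 5) := by simpa using h5.ratCast_add 1
    simpa [div_eq_mul_inv] using this.div_natCast (by norm_num : (2:ℕ) ≠ 0)
  have hirr : ∀ m : ℕ, m ≠ 0 → Irrational (a * m) := fun m hm => hia.mul_natCast hm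
  have key : ∀ m : ℕ, m ≠ 0 → ∀ z : ℤ, a * m ≠ z := fun m hm z => (hirr m hm).ne_int z
  constructor
  · rintro ⟨k, hk, hnk⟩
    have hb : ((n : ℤ) : ℝ) ≤ a * k ∧ a * k < (n : ℤ) + 1 := by
      rw [hnk]; exact ⟨Int.floor_le _, Int.lt_floor_add_one _⟩
    have hlt : (n : ℝ) < a * k := by
      rcases lt_of_le_of_ne (by exact_mod_cast hb.1) (fun h => key k hk.ne' n h.symm) with h
      exact h
    have hub : a * k < (n : ℝ) + 1 := by exact_mod_cast hb.2
    have h1 : ⌊a * (n : ℝ)⌋ = (k : ℤ) + n - 1 := by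
      rw [Int.floor_eq_iff]
      constructor
      · push_cast; nlinarith
      · push_cast; nlinarith
    have h2 : ⌊a * ((n : ℝ) + 1)⌋ = (k : ℤ) + n + 1 := by
      rw [Int.floor_eq_iff]
      constructor
      · push_cast; nlinarith
      · push_cast; nlinarith
    omega
  · intro hne
    set m : ℤ := ⌊a * (n : ℝ)⌋ with hm
    have hb1 : (m : ℝ) ≤ a * n := Int.floor_le _
    have hb2 : a * n < m + 1 := Int.lt_floor_add_one _
    have hmn : (n : ℤ) ≤ m := by
      have : (n : ℝ) ≤ a * n := by nlinarith [(Nat.one_le_cast (α := ℝ)).mpr hn]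
      exact Int.le_floor.mpr (by exact_mod_cast this)
    -- claim: a * n < m + 2 - a
    have hfrac : a * n < m + 2 - a := by
      by_contra hge
      push_neg at hge
      have hne2 : a * n ≠ m + 2 - a := by
        intro h
        have : a * ((n : ℝ) + 1) = ((m + 2 : ℤ) : ℝ) := by push_cast; nlinarith
        exact key (n + 1) (by omega) (m + 2) (by push_cast at this ⊢; linarith)
      have hgt : m + 2 - a < a * n := lt_of_le_of_ne hge (fun h => hne2 h.symm)
      refine hne ⟨(m - n + 1).toNat, by omega, ?_⟩
      have hk : ((m - n + 1).toNat : ℝ) = (m : ℝ) - n + 1 := by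
        have : ((m - n + 1).toNat : ℤ) = m - n + 1 := Int.toNat_of_nonneg (by omega)
        exact_mod_cast congrArg (fun z : ℤ => (z : ℝ)) this
      symm
      rw [Int.floor_eq_iff]
      rw [hk]
      constructor
      · push_cast; nlinarith
      · push_cast; nlinarith
    have h2 : ⌊a * ((n : ℝ) + 1)⌋ = m + 1 := by
      rw [Int.floor_eq_iff]
      constructor
      · push_cast; nlinarith
      · push_cast; nlinarith
    omega
end

section
/- Let a = (1+√5)/2 be the golden ratio, b = a² = a + 1, and set b_n = ⌊b·n⌋ for positive integers n. Then for every positive integer n: b_{n+1} = b_n + 3 if n belongs to the Beatty sequence A = { ⌊a·k⌋ : k a positive integer }, and b_{n+1} = b_n + 2 otherwise. -/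
set_option maxHeartbeats 1000000 in
/-- For `a = (1+√5)/2` the golden ratio, `b = a² = a + 1`, `bₙ = ⌊b·n⌋`,
for every positive integer `n`: `b_{n+1} = bₙ + 3` if `n` belongs to the Beatty sequence
`A = {⌊a·k⌋ : k ≥ 1}`, and `b_{n+1} = bₙ + 2` otherwise. -/
theorem stmt5 (a b : ℝ) (ha : a = (1 + Real.sqrt 5) / 2) (hb : b = a + 1)
    (n : ℕ) (hn : 0 < n) :
    ((∃ k : ℕ, 0 < k ∧ (n : ℤ) = ⌊a * (k : ℝ)⌋) → ⌊b * ((n : ℝ) + 1)⌋ = ⌊b * (n : ℝ)⌋ + 3) ∧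
    (¬ (∃ k : ℕ, 0 < k ∧ (n : ℤ) = ⌊a * (k : ℝ)⌋) → ⌊b * ((n : ℝ) + 1)⌋ = ⌊b * (n : ℝ)⌋ + 2) := by
  have hs : Real.sqrt 5 ^ 2 = 5 := Real.sq_sqrt (by norm_num)
  have hsn : (0:ℝ) ≤ Real.sqrt 5 := Real.sqrt_nonneg 5
  have hs2 : (2:ℝ) < Real.sqrt 5 := by nlinarith
  have hs3 : Real.sqrt 5 < 3 := by nlinarith
  have ha1 : 1 < a := by rw [ha]; linarith
  have ha2 : a < 2 := by rw [ha]; linarith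
  have hsq : a ^ 2 = a + 1 := by rw [ha]; nlinarith
  have h5i : Irrational (Real.sqrt 5) := by
    have := (by norm_num : Nat.Prime 5).irrational_sqrt
    simpa using this
  have hirr : Irrational a := by
    intro ⟨q, hq⟩
    exact h5i ⟨2 * q - 1, by push_cast; rw [ha] at hq; linarith⟩
  have key : ∀ m : ℕ, 0 < m → ∀ z : ℤ, a * (m : ℝ) ≠ (z : ℝ) := by
    intro m hm z h
    apply hirr
    refine ⟨(z : ℚ) / (m : ℚ), ?_⟩
    have hm' : (m : ℝ) ≠ 0 := by positivity
    push_cast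
    field_simp
    linarith [h]
  set F : ℤ := ⌊a * (n : ℝ)⌋ with hF
  clear_value F
  have hFle : (F : ℝ) ≤ a * n := by rw [hF]; exact Int.floor_le _
  have hFlt : a * n < F + 1 := by rw [hF]; exact Int.lt_floor_add_one _
  have hn1 : (1:ℝ) ≤ n := by exact_mod_cast hn
  -- floors of b
  have hbn : ⌊b * (n : ℝ)⌋ = F + n := by
    have : b * (n : ℝ) = a * n + ((n : ℤ) : ℝ) := by rw [hb]; push_cast; ring
    rw [this, Int.floor_add_intCast, ← hF]
  have hbn1 : ⌊b * ((n : ℝ) + 1)⌋ = ⌊a * ((n : ℝ) + 1)⌋ + (n + 1) := by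
    have : b * ((n : ℝ) + 1) = a * ((n : ℝ) + 1) + (((n : ℤ) + 1 : ℤ) : ℝ) := by
      rw [hb]; push_cast; ring
    rw [this, Int.floor_add_intCast]
  have hne : a * ((n : ℝ) + 1) ≠ ((F + 2 : ℤ) : ℝ) := by
    have := key (n + 1) (by omega) (F + 2)
    push_cast at this ⊢
    convert this using 2
  rcases lt_or_gt_of_ne hne with hlt | hgt
  · -- a*n + a < F + 2 : not in Beatty, difference 2
    push_cast at hlt
    have hfl : ⌊a * ((n : ℝ) + 1)⌋ = F + 1 := by
      rw [Int.floor_eq_iff]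
      constructor
      · push_cast; nlinarith
      · push_cast; nlinarith
    constructor
    · rintro ⟨k, hk, hkn⟩
      exfalso
      have hkle : (n : ℝ) ≤ a * k := by
        have := Int.floor_le (a * (k : ℝ)); rw [← hkn] at this; exact_mod_cast this
      have hklt : a * k < (n : ℝ) + 1 := by
        have := Int.lt_floor_add_one (a * (k : ℝ)); rw [← hkn] at this
        push_cast at this; linarith
      have hklt' : (n : ℝ) < a * k :=
        lt_of_le_of_ne hkle (fun h => key k hk n h.symm)
      have hk1 : ((F : ℝ) - n) < k := by nlinarith
      have hk2 : (k : ℝ) < (F : ℝ) - n + 1 := by nlinarith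
      have hk1' : F - (n : ℤ) + 1 ≤ (k : ℤ) := by exact_mod_cast Int.lt_iff_add_one_le.mp (by exact_mod_cast hk1)
      have : ((k : ℤ) : ℝ) < (F : ℝ) - n + 1 := by exact_mod_cast hk2
      have h3 : ((F - (n:ℤ) + 1 : ℤ) : ℝ) ≤ (k : ℝ) := by exact_mod_cast hk1'
      push_cast at h3
      linarith
    · intro _
      rw [hbn1, hbn, hfl]; ring
  · -- a*n + a > F + 2 : in Beatty, difference 3
    push_cast at hgt
    have hfl : ⌊a * ((n : ℝ) + 1)⌋ = F + 2 := by
      rw [Int.floor_eq_iff]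
      constructor
      · push_cast; nlinarith
      · push_cast; nlinarith
    constructor
    · intro _
      rw [hbn1, hbn, hfl]; ring
    · intro hcon
      exfalso
      apply hcon
      have hkpos : 0 < F + 1 - (n : ℤ) := by
        have : (n : ℝ) < (F : ℝ) + 1 := by nlinarith
        have : (n : ℤ) < F + 1 := by exact_mod_cast this
        omega
      have hlow : (n : ℝ) * (a - 1) < (F : ℝ) + 1 - n := by nlinarith
      have hhigh : (F : ℝ) + 1 - n < ((n : ℝ) + 1) * (a - 1) := by nlinarith
      have hapos : (0:ℝ) < a := by linarith
      have e1 : a * ((n : ℝ) * (a - 1)) = n := by linear_combination (n : ℝ) * hsq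
      have e2 : a * (((n : ℝ) + 1) * (a - 1)) = (n : ℝ) + 1 := by
        linear_combination ((n : ℝ) + 1) * hsq
      have hL := mul_lt_mul_of_pos_left hlow hapos
      rw [e1] at hL
      have hU := mul_lt_mul_of_pos_left hhigh hapos
      rw [e2] at hU
      refine ⟨(F + 1 - (n : ℤ)).toNat, by omega, ?_⟩
      have hcast : (((F + 1 - (n : ℤ)).toNat : ℤ) : ℝ) = (F : ℝ) + 1 - n := by
        rw [Int.toNat_of_nonneg (by omega)]; push_cast; ring
      have hcast' : (((F + 1 - (n : ℤ)).toNat : ℕ) : ℝ) = (F : ℝ) + 1 - n := by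
        exact_mod_cast hcast
      symm
      rw [Int.floor_eq_iff, hcast']
      refine ⟨by push_cast; linarith, by push_cast; linarith⟩
end

section
/- Let 0 < c < 1 and 0 < d < 1 be irrational real numbers and let k be a nonnegative integer. Define f(n) = ⌊c(n+1)⌋ − ⌊c·n⌋ and g(n) = ⌊d(n+1)⌋ − ⌊d·n⌋ for positive integers n. Then for every real number t ≥ 1, Σ_{1 ≤ n ≤ t} f(n)·g(⌊c·n⌋ + k + 1) = ⌊d( ⌊c(⌊t⌋ + 1)⌋ + k + 1 )⌋ − ⌊d(k + 1)⌋. -/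
/-- For irrational `0 < c < 1`, `0 < d < 1`, and a nonnegative integer `k`, with
`f(n) = ⌊c(n+1)⌋ − ⌊c·n⌋` and `g(n) = ⌊d(n+1)⌋ − ⌊d·n⌋`: for every real `t ≥ 1`,
`Σ_{1 ≤ n ≤ t} f(n)·g(⌊c·n⌋+k+1) = ⌊d(⌊c(⌊t⌋+1)⌋+k+1)⌋ − ⌊d(k+1)⌋`. -/
theorem stmt9 (c d : ℝ) (hc : Irrational c) (hd : Irrational d)
    (hc0 : 0 < c) (hc1 : c < 1) (hd0 : 0 < d) (hd1 : d < 1) (k : ℕ)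
    (f g : ℤ → ℤ)
    (hf : ∀ n : ℤ, 0 < n → f n = ⌊c * ((n : ℝ) + 1)⌋ - ⌊c * (n : ℝ)⌋)
    (hg : ∀ n : ℤ, 0 < n → g n = ⌊d * ((n : ℝ) + 1)⌋ - ⌊d * (n : ℝ)⌋)
    (t : ℝ) (ht : 1 ≤ t) :
    ∑ n ∈ Finset.Icc 1 ⌊t⌋.toNat, f n * g (⌊c * (n : ℝ)⌋ + k + 1)
      = ⌊d * ((⌊c * ((⌊t⌋ : ℝ) + 1)⌋ : ℝ) + (k : ℝ) + 1)⌋ - ⌊d * ((k : ℝ) + 1)⌋ := by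
  set H : ℕ → ℤ := fun n => ⌊d * ((⌊c * (n : ℝ)⌋ : ℝ) + (k : ℝ) + 1)⌋ with hH
  have step : ∀ n : ℕ, 1 ≤ n →
      f n * g (⌊c * (n : ℝ)⌋ + (k : ℤ) + 1) = H (n + 1) - H n := by
    intro n hn
    have hn' : (0 : ℤ) < (n : ℤ) := by exact_mod_cast hn
    have hcast : ((n : ℤ) : ℝ) = (n : ℝ) := by push_cast; ring
    have hfn : f n = ⌊c * ((n : ℝ) + 1)⌋ - ⌊c * (n : ℝ)⌋ := by
      rw [hf n hn', hcast]
    have hmono : ⌊c * (n : ℝ)⌋ ≤ ⌊c * ((n : ℝ) + 1)⌋ := by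
      apply Int.floor_le_floor; nlinarith
    have hub : ⌊c * ((n : ℝ) + 1)⌋ ≤ ⌊c * (n : ℝ)⌋ + 1 := by
      calc ⌊c * ((n : ℝ) + 1)⌋ ≤ ⌊c * (n : ℝ) + 1⌋ := by
              apply Int.floor_le_floor; nlinarith
        _ = ⌊c * (n : ℝ)⌋ + 1 := by rw [Int.floor_add_one]
    rcases eq_or_lt_of_le hmono with h | h
    · -- f n = 0 and H (n+1) = H n
      have : f n = 0 := by rw [hfn, ← h]; ring
      rw [this, zero_mul, hH]
      simp only
      rw [show (((n + 1 : ℕ)) : ℝ) = (n : ℝ) + 1 by push_cast; ring, ← h]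
      ring
    · have h1 : ⌊c * ((n : ℝ) + 1)⌋ = ⌊c * (n : ℝ)⌋ + 1 := le_antisymm hub h
      have hposfl : 0 ≤ ⌊c * (n : ℝ)⌋ := Int.floor_nonneg.mpr (by positivity)
      have hfn1 : f n = 1 := by rw [hfn, h1]; ring
      rw [hfn1, one_mul, hg _ (by omega), hH]
      simp only
      rw [show (((n + 1 : ℕ)) : ℝ) = (n : ℝ) + 1 by push_cast; ring, h1]
      push_cast
      ring_nf
  -- main telescoping
  have key : ∀ N : ℕ, ∑ n ∈ Finset.Icc 1 N, f n * g (⌊c * (n : ℝ)⌋ + (k : ℤ) + 1)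
      = H (N + 1) - H 1 := by
    intro N
    induction N with
    | zero => simp
    | succ m ih =>
      rw [Finset.sum_Icc_succ_top (by omega), ih, step (m + 1) (by omega)]
      ring
  have hnn : 0 ≤ ⌊t⌋ := Int.le_floor.mpr (by exact_mod_cast (by linarith : (0:ℝ) ≤ t))
  have htR : ((⌊t⌋.toNat + 1 : ℕ) : ℝ) = ((⌊t⌋ : ℤ) : ℝ) + 1 := by
    have h2 : ((⌊t⌋.toNat : ℕ) : ℝ) = ((⌊t⌋ : ℤ) : ℝ) := by
      exact_mod_cast congrArg (fun z : ℤ => (z : ℝ)) (Int.toNat_of_nonneg hnn)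
    push_cast
    rw [h2]
  have h1 : H 1 = ⌊d * ((k : ℝ) + 1)⌋ := by
    rw [hH]
    have hc' : ⌊c⌋ = 0 := Int.floor_eq_zero_iff.mpr ⟨hc0.le, hc1⟩
    simp only [Nat.cast_one, mul_one, hc']
    norm_num
  rw [key ⌊t⌋.toNat, h1, hH]
  simp only
  rw [htR]
end

section
/- Let c > 1 be an irrational real number. There exists a constant C > 0 such that for every positive integer m, with x = ⌊c·m⌋, one has | ∫_1^x ⌊c⁻¹(⌊t⌋ + 1)⌋ / t² dt − ( (1/c)(log m + log c + γ) − Σ_{n=1}^∞ {c⁻¹(n+1)} / (n(n+1)) ) | ≤ C/m, where γ is Euler's constant and the infinite series converges. -/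
open Real


private lemma ae_ne_real (x : ℝ) : ∀ᵐ (t : ℝ), t ≠ x := by
  rw [MeasureTheory.ae_iff]
  simp only [ne_eq, not_not, Set.setOf_eq_eq_singleton]
  exact Real.volume_singleton

private lemma step_eq (a : ℝ) (n : ℕ) :
    ∀ᵐ (t : ℝ), t ∈ Set.uIoc ((n : ℝ)) ((n : ℝ) + 1) →
      (⌊a * ((⌊t⌋ : ℝ) + 1)⌋ : ℝ) / t ^ 2 = (⌊a * ((n : ℝ) + 1)⌋ : ℝ) / t ^ 2 := by
  filter_upwards [ae_ne_real ((n : ℝ) + 1)] with t ht hmem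
  rw [Set.uIoc_of_le (by linarith : (n : ℝ) ≤ (n : ℝ) + 1)] at hmem
  have hfl : ⌊t⌋ = (n : ℤ) := by
    rw [Int.floor_eq_iff]
    push_cast
    exact ⟨hmem.1.le, lt_of_le_of_ne hmem.2 ht⟩
  rw [hfl]
  norm_num

private lemma step_integrable (a : ℝ) (n : ℕ) (hn : 1 ≤ n) :
    IntervalIntegrable (fun t => (⌊a * ((⌊t⌋ : ℝ) + 1)⌋ : ℝ) / t ^ 2)
      MeasureTheory.volume (n : ℝ) ((n : ℝ) + 1) := by
  have hn' : (1 : ℝ) ≤ n := by exact_mod_cast hn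
  have h0 : (0 : ℝ) ∉ Set.uIcc ((n : ℝ)) ((n : ℝ) + 1) := by
    rw [Set.uIcc_of_le (by linarith)]
    intro h
    have := h.1
    linarith
  have base : IntervalIntegrable (fun t : ℝ => (⌊a * ((n : ℝ) + 1)⌋ : ℝ) / t ^ 2)
      MeasureTheory.volume (n : ℝ) ((n : ℝ) + 1) := by
    have : IntervalIntegrable (fun t : ℝ => t ^ (-2 : ℤ))
        MeasureTheory.volume (n : ℝ) ((n : ℝ) + 1) := intervalIntegral.intervalIntegrable_zpow (Or.inr h0)
    have h2 := this.const_mul ((⌊a * ((n : ℝ) + 1)⌋ : ℝ))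
    apply h2.congr
    intro t _
    simp only [div_eq_mul_inv, zpow_neg]
    norm_num
  exact base.congr_ae ((MeasureTheory.ae_restrict_iff' measurableSet_uIoc).2
    ((step_eq a n).mono fun t h ht => (h ht).symm))

private lemma step_value (K : ℝ) (n : ℕ) (hn : 1 ≤ n) :
    ∫ t in (n : ℝ)..((n : ℝ) + 1), K / t ^ 2 = K * (1 / (n : ℝ) - 1 / ((n : ℝ) + 1)) := by
  have hn' : (1 : ℝ) ≤ n := by exact_mod_cast hn
  have h0 : (0 : ℝ) ∉ Set.uIcc ((n : ℝ)) ((n : ℝ) + 1) := by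
    rw [Set.uIcc_of_le (by linarith)]
    intro h
    have := h.1
    linarith
  have hfun : ∀ t : ℝ, K / t ^ 2 = K * t ^ (-2 : ℤ) := fun t => by
    simp only [div_eq_mul_inv, zpow_neg]
    norm_num
  simp_rw [hfun]
  rw [intervalIntegral.integral_const_mul, integral_zpow (Or.inr ⟨by norm_num, h0⟩)]
  have h1 : (n : ℝ) ≠ 0 := by linarith
  have h2 : (n : ℝ) + 1 ≠ 0 := by linarith
  norm_num [zpow_neg]
  all_goals first
  | exact Or.inl trivial
  | (field_simp; try ring)
  all_goals exact Or.inl trivial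

private lemma step_integral (a : ℝ) (n : ℕ) (hn : 1 ≤ n) :
    ∫ t in (n : ℝ)..((n : ℝ) + 1), (⌊a * ((⌊t⌋ : ℝ) + 1)⌋ : ℝ) / t ^ 2
      = (⌊a * ((n : ℝ) + 1)⌋ : ℝ) * (1 / (n : ℝ) - 1 / ((n : ℝ) + 1)) := by
  rw [intervalIntegral.integral_congr_ae (step_eq a n)]
  exact step_value _ n hn

private lemma integral_eq_sum (a : ℝ) (N : ℕ) (hN : 1 ≤ N) :
    ∫ t in (1 : ℝ)..(N : ℝ), (⌊a * ((⌊t⌋ : ℝ) + 1)⌋ : ℝ) / t ^ 2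
      = ∑ k ∈ Finset.range (N - 1),
          (⌊a * ((k : ℝ) + 2)⌋ : ℝ) * (1 / ((k : ℝ) + 1) - 1 / ((k : ℝ) + 2)) := by
  have key := intervalIntegral.sum_integral_adjacent_intervals
    (f := fun t => (⌊a * ((⌊t⌋ : ℝ) + 1)⌋ : ℝ) / t ^ 2) (μ := MeasureTheory.volume)
    (a := fun k : ℕ => ((k : ℝ) + 1)) (n := N - 1)
    (fun k _ => by
      have := step_integrable a (k + 1) (Nat.le_add_left 1 k)
      push_cast at this ⊢
      convert this using 2 <;> ring)
  have hend : ((N - 1 : ℕ) : ℝ) + 1 = (N : ℝ) := by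
    have := Nat.cast_sub hN (R := ℝ)
    push_cast at this ⊢
    rw [this]; ring
  have key' : ∑ k ∈ Finset.range (N - 1),
      ∫ t in ((k : ℝ) + 1)..((k : ℝ) + 1 + 1), (⌊a * ((⌊t⌋ : ℝ) + 1)⌋ : ℝ) / t ^ 2
      = ∫ t in (1 : ℝ)..(N : ℝ), (⌊a * ((⌊t⌋ : ℝ) + 1)⌋ : ℝ) / t ^ 2 := by
    simpa [hend] using key
  rw [← key']
  apply Finset.sum_congr rfl
  intro k _
  have := step_integral a (k + 1) (Nat.le_add_left 1 k)
  push_cast at this ⊢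
  convert this using 2 <;> ring

private lemma summable_g (c : ℝ) :
    Summable (fun n : ℕ =>
      Int.fract (c⁻¹ * ((n : ℝ) + 2)) / (((n : ℝ) + 1) * ((n : ℝ) + 2))) := by
  have hb : Summable (fun n : ℕ => 1 / ((n : ℝ) + 1) ^ 2) := by
    have h := (summable_nat_add_iff 1).2 (Real.summable_one_div_nat_pow.2 one_lt_two)
    refine h.congr fun n => ?_
    push_cast
    ring
  refine Summable.of_nonneg_of_le
    (fun n => div_nonneg (Int.fract_nonneg _) (by positivity)) (fun n => ?_) hb
  have hk : (0 : ℝ) ≤ (n : ℝ) := Nat.cast_nonneg n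
  exact div_le_div₀ (by norm_num) (Int.fract_lt_one _).le (by positivity) (by nlinarith)

private lemma harmonic_cast (n : ℕ) :
    ((harmonic n : ℚ) : ℝ) = ∑ k ∈ Finset.range n, 1 / ((k : ℝ) + 1) := by
  rw [harmonic]
  push_cast
  simp [one_div]

private lemma harmonic_gamma (N : ℕ) (hN : 1 ≤ N) :
    |((harmonic (N - 1) : ℚ) : ℝ) - Real.log N - Real.eulerMascheroniConstant| ≤ 1 / (N : ℝ) := by
  have hN' : (1 : ℝ) ≤ N := by exact_mod_cast hN
  have hcast : ((N - 1 : ℕ) : ℝ) + 1 = (N : ℝ) := by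
    rw [Nat.cast_sub hN]
    push_cast
    ring
  have e1 := Real.eulerMascheroniSeq_lt_eulerMascheroniConstant (N - 1)
  rw [Real.eulerMascheroniSeq, hcast] at e1
  have e2 := Real.eulerMascheroniConstant_lt_eulerMascheroniSeq' N
  rw [Real.eulerMascheroniSeq', if_neg (by omega : N ≠ 0)] at e2
  have hsucc : ((harmonic N : ℚ) : ℝ) = ((harmonic (N - 1) : ℚ) : ℝ) + 1 / (N : ℝ) := by
    have hNe : N = (N - 1) + 1 := by omega
    conv_lhs => rw [hNe]
    rw [harmonic_succ]
    push_cast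
    rw [hcast]
    ring
  rw [hsucc] at e2
  have hNpos : (0 : ℝ) < N := by linarith
  rw [abs_le]
  constructor
  · linarith
  · have : (0 : ℝ) ≤ 1 / (N : ℝ) := by positivity
    linarith

private lemma tail_bound (c : ℝ) (N : ℕ) (hN : 1 ≤ N) :
    ∑' k : ℕ, (fun n : ℕ =>
        Int.fract (c⁻¹ * ((n : ℝ) + 2)) / (((n : ℝ) + 1) * ((n : ℝ) + 2))) (k + (N - 1))
      ≤ 1 / (N : ℝ) := by
  have hN' : (1 : ℝ) ≤ N := by exact_mod_cast hN
  apply Real.tsum_le_of_sum_range_le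
    (fun n => div_nonneg (Int.fract_nonneg _) (by positivity))
  intro K
  have hb : ∀ k : ℕ, (fun n : ℕ =>
        Int.fract (c⁻¹ * ((n : ℝ) + 2)) / (((n : ℝ) + 1) * ((n : ℝ) + 2))) (k + (N - 1))
      ≤ 1 / ((k : ℝ) + N) - 1 / ((k : ℝ) + N + 1) := by
    intro k
    have hc1 : ((k + (N - 1) : ℕ) : ℝ) = (k : ℝ) + (N : ℝ) - 1 := by
      push_cast [Nat.cast_sub hN]
      ring
    simp only [hc1]
    have h1 : (0 : ℝ) < (k : ℝ) + N := by
      have : (0 : ℝ) ≤ k := Nat.cast_nonneg k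
      linarith
    have h2 : (0 : ℝ) < (k : ℝ) + N + 1 := by linarith
    calc Int.fract (c⁻¹ * ((k : ℝ) + (N : ℝ) - 1 + 2)) /
          (((k : ℝ) + (N : ℝ) - 1 + 1) * ((k : ℝ) + (N : ℝ) - 1 + 2))
        ≤ 1 / (((k : ℝ) + (N : ℝ) - 1 + 1) * ((k : ℝ) + (N : ℝ) - 1 + 2)) := by
          exact div_le_div₀ (by norm_num) (Int.fract_lt_one _).le (by nlinarith) le_rfl
      _ = 1 / ((k : ℝ) + N) - 1 / ((k : ℝ) + N + 1) := by
          have e1 : (k : ℝ) + (N : ℝ) - 1 + 1 = (k : ℝ) + N := by ring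
          have e2 : (k : ℝ) + (N : ℝ) - 1 + 2 = (k : ℝ) + N + 1 := by ring
          rw [e1, e2, div_sub_div _ _ h1.ne' h2.ne']
          congr 1
          ring
  calc ∑ k ∈ Finset.range K, (fun n : ℕ =>
        Int.fract (c⁻¹ * ((n : ℝ) + 2)) / (((n : ℝ) + 1) * ((n : ℝ) + 2))) (k + (N - 1))
      ≤ ∑ k ∈ Finset.range K, (1 / ((k : ℝ) + N) - 1 / ((k : ℝ) + N + 1)) :=
        Finset.sum_le_sum fun k _ => hb k
    _ = 1 / ((0 : ℕ) + (N : ℝ)) - 1 / ((K : ℝ) + N) := by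
        rw [← Finset.sum_range_sub' (fun k : ℕ => 1 / ((k : ℝ) + N)) K]
        apply Finset.sum_congr rfl
        intro k _
        push_cast
        ring
    _ ≤ 1 / (N : ℝ) := by
        have h3 : (0 : ℝ) < (K : ℝ) + N := by
          have : (0 : ℝ) ≤ K := Nat.cast_nonneg K
          linarith
        have : (0 : ℝ) ≤ 1 / ((K : ℝ) + N) := by positivity
        simp only [Nat.cast_zero, zero_add]
        linarith

/-- For irrational `c > 1` there is `C > 0` such that for every positive
integer `m`, with `x = ⌊c·m⌋`,
`| ∫_1^x ⌊c⁻¹(⌊t⌋+1)⌋/t² dt − ( (1/c)(log m + log c + γ) − Σ_{n≥1} {c⁻¹(n+1)}/(n(n+1)) ) | ≤ C/m`,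
where the series converges. -/
theorem stmt10 (c : ℝ) (hc : Irrational c) (hc1 : 1 < c) :
    Summable (fun n : ℕ =>
      Int.fract (c⁻¹ * ((n : ℝ) + 2)) / (((n : ℝ) + 1) * ((n : ℝ) + 2))) ∧
    ∃ C : ℝ, 0 < C ∧ ∀ m : ℕ, 0 < m →
      |(∫ t in (1 : ℝ)..((⌊c * (m : ℝ)⌋ : ℤ) : ℝ), (⌊c⁻¹ * ((⌊t⌋ : ℝ) + 1)⌋ : ℝ) / t ^ 2)
        - ((1 / c) * (Real.log m + Real.log c + Real.eulerMascheroniConstant)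
            - ∑' n : ℕ, Int.fract (c⁻¹ * ((n : ℝ) + 2)) / (((n : ℝ) + 1) * ((n : ℝ) + 2)))|
        ≤ C / m := by
  have hc0 : (0 : ℝ) < c := lt_trans one_pos hc1
  refine ⟨summable_g c, 3, by norm_num, fun m hm => ?_⟩
  have hm1 : (1 : ℝ) ≤ m := by exact_mod_cast hm
  have hcm1 : 1 ≤ c * m := by nlinarith
  have hflpos : 0 < ⌊c * (m : ℝ)⌋ := Int.floor_pos.2 hcm1
  set N : ℕ := (⌊c * (m : ℝ)⌋).toNat with hNdef
  have hNZ : (N : ℤ) = ⌊c * (m : ℝ)⌋ := Int.toNat_of_nonneg hflpos.le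
  have hNc : ((⌊c * (m : ℝ)⌋ : ℤ) : ℝ) = (N : ℝ) := by
    rw [← hNZ]
    push_cast
    ring
  have hN1 : 1 ≤ N := by omega
  have hmN : m ≤ N := by
    have : (m : ℤ) ≤ ⌊c * (m : ℝ)⌋ := Int.le_floor.2 (by push_cast; nlinarith)
    omega
  have hN1' : (1 : ℝ) ≤ N := by exact_mod_cast hN1
  have hNpos : (0 : ℝ) < N := by linarith
  have hNle : (N : ℝ) ≤ c * m := hNc ▸ Int.floor_le _
  have hNgt : c * m < (N : ℝ) + 1 := by
    have := Int.lt_floor_add_one (c * (m : ℝ))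
    rw [hNc] at this
    exact this
  rw [hNc, integral_eq_sum c⁻¹ N hN1]
  have hterm : ∀ k : ℕ, (⌊c⁻¹ * ((k : ℝ) + 2)⌋ : ℝ) * (1 / ((k : ℝ) + 1) - 1 / ((k : ℝ) + 2))
      = c⁻¹ * (1 / ((k : ℝ) + 1))
        - Int.fract (c⁻¹ * ((k : ℝ) + 2)) / (((k : ℝ) + 1) * ((k : ℝ) + 2)) := by
    intro k
    have h1 : ((k : ℝ) + 1) ≠ 0 := by positivity
    have h2 : ((k : ℝ) + 2) ≠ 0 := by positivity
    rw [← Int.self_sub_fract]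
    field_simp
    ring
  rw [Finset.sum_congr rfl (fun k _ => hterm k), Finset.sum_sub_distrib, ← Finset.mul_sum,
    ← harmonic_cast,
    (Summable.sum_add_tsum_nat_add (N - 1) (summable_g c)).symm]
  set H : ℝ := ((harmonic (N - 1) : ℚ) : ℝ) with hHdef
  set P : ℝ := ∑ k ∈ Finset.range (N - 1),
      Int.fract (c⁻¹ * ((k : ℝ) + 2)) / (((k : ℝ) + 1) * ((k : ℝ) + 2)) with hPdef
  set T : ℝ := ∑' k : ℕ, (fun n : ℕ =>
      Int.fract (c⁻¹ * ((n : ℝ) + 2)) / (((n : ℝ) + 1) * ((n : ℝ) + 2))) (k + (N - 1)) with hTdef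
  have hT0 : (0 : ℝ) ≤ T :=
    tsum_nonneg fun k => div_nonneg (Int.fract_nonneg _) (by positivity)
  have hT1 : T ≤ 1 / (N : ℝ) := tail_bound c N hN1
  have hlog : Real.log m + Real.log c = Real.log (c * m) := by
    rw [Real.log_mul hc0.ne' (by positivity : (m : ℝ) ≠ 0)]
    ring
  have hH : |H - Real.log (c * m) - Real.eulerMascheroniConstant| ≤ 2 / (N : ℝ) := by
    have h1 := harmonic_gamma N hN1
    have h2 : Real.log (N : ℝ) ≤ Real.log (c * m) := Real.log_le_log hNpos hNle
    have h3 : Real.log (c * m) ≤ Real.log (N : ℝ) + 1 / (N : ℝ) := by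
      have l1 : Real.log (c * m) ≤ Real.log ((N : ℝ) + 1) :=
        Real.log_le_log (by positivity) hNgt.le
      have l2 := Real.log_le_sub_one_of_pos (show (0 : ℝ) < ((N : ℝ) + 1) / (N : ℝ) by positivity)
      rw [Real.log_div (by positivity) (by positivity)] at l2
      have l3 : ((N : ℝ) + 1) / (N : ℝ) - 1 = 1 / (N : ℝ) := by field_simp; ring
      linarith
    rw [← hHdef] at h1
    rw [abs_le] at h1 ⊢
    have hposN : (0 : ℝ) ≤ 1 / (N : ℝ) := by positivity
    have h2N : 2 / (N : ℝ) = 1 / (N : ℝ) + 1 / (N : ℝ) := by ring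
    constructor
    · linarith [h1.1]
    · linarith [h1.2]
  have hrw : c⁻¹ * H - P
      - (1 / c * (Real.log m + Real.log c + Real.eulerMascheroniConstant) - (P + T))
      = c⁻¹ * (H - Real.log (c * m) - Real.eulerMascheroniConstant) + T := by
    rw [← hlog]
    field_simp
    ring
  rw [hrw]
  calc |c⁻¹ * (H - Real.log (c * m) - Real.eulerMascheroniConstant) + T|
      ≤ |c⁻¹ * (H - Real.log (c * m) - Real.eulerMascheroniConstant)| + |T| := abs_add_le _ _
    _ ≤ c⁻¹ * (2 / (N : ℝ)) + 1 / (N : ℝ) := by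
        rw [abs_mul, abs_of_nonneg (inv_nonneg.2 hc0.le), abs_of_nonneg hT0]
        exact add_le_add (mul_le_mul_of_nonneg_left hH (inv_nonneg.2 hc0.le)) hT1
    _ ≤ 3 / (N : ℝ) := by
        have hcinv : c⁻¹ ≤ 1 := by
          rw [inv_le_one_iff₀]
          right
          exact hc1.le
        have h2N : (0 : ℝ) ≤ 2 / (N : ℝ) := by positivity
        have : c⁻¹ * (2 / (N : ℝ)) ≤ 2 / (N : ℝ) := by nlinarith
        have heq : 2 / (N : ℝ) + 1 / (N : ℝ) = 3 / (N : ℝ) := by ring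
        linarith
    _ ≤ 3 / (m : ℝ) := by
        have hmpos : (0 : ℝ) < m := by linarith
        have hmN' : (m : ℝ) ≤ (N : ℝ) := by exact_mod_cast hmN
        gcongr
end

section
/- Let c > 1 and d > 1 be irrational real numbers and let k be a nonnegative integer. Set c'_n = ⌊n/c⌋ for positive integers n. There exists a constant C > 0 such that for every positive integer m, with x = ⌊c·m⌋, one has | ∫_1^x ⌊d⁻¹( ⌊c⁻¹(⌊t⌋ + 1)⌋ + k + 1 )⌋ / t² dt − ( (cd)⁻¹(log m + log c + γ) + d⁻¹(k+1) − Σ_{n=1}^∞ ( d⁻¹·{c⁻¹(n+1)} + {d⁻¹(c'_{n+1} + k + 1)} ) / (n(n+1)) ) | ≤ C/m, where γ is Euler's constant and the infinite series converges. -/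
open Real MeasureTheory Finset

namespace Stmt11Aux

noncomputable def phi (c d : ℝ) (k : ℕ) (t : ℝ) : ℝ :=
  (⌊d⁻¹ * ((⌊c⁻¹ * ((⌊t⌋ : ℝ) + 1)⌋ : ℝ) + (k : ℝ) + 1)⌋ : ℝ) / t ^ 2

noncomputable def A (c d : ℝ) (k : ℕ) (n : ℕ) : ℝ :=
  (⌊d⁻¹ * ((⌊c⁻¹ * ((n : ℝ) + 1)⌋ : ℝ) + (k : ℝ) + 1)⌋ : ℝ)

noncomputable def E (c d : ℝ) (k : ℕ) (n : ℕ) : ℝ :=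
  d⁻¹ * Int.fract (c⁻¹ * ((n : ℝ) + 1))
    + Int.fract (d⁻¹ * ((⌊c⁻¹ * ((n : ℝ) + 1)⌋ : ℝ) + (k : ℝ) + 1))

lemma A_eq (c d : ℝ) (k n : ℕ) :
    A c d k n = (c*d)⁻¹ * ((n:ℝ)+1) + d⁻¹ * ((k:ℝ)+1) - E c d k n := by
  unfold A E
  rw [show ((⌊d⁻¹ * ((⌊c⁻¹ * ((n : ℝ) + 1)⌋ : ℝ) + (k : ℝ) + 1)⌋ : ℝ))
      = d⁻¹ * ((⌊c⁻¹ * ((n : ℝ) + 1)⌋ : ℝ) + (k : ℝ) + 1)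
        - Int.fract (d⁻¹ * ((⌊c⁻¹ * ((n : ℝ) + 1)⌋ : ℝ) + (k : ℝ) + 1))
      from (Int.self_sub_fract _).symm]
  rw [show ((⌊c⁻¹ * ((n : ℝ) + 1)⌋ : ℝ))
      = c⁻¹ * ((n:ℝ)+1) - Int.fract (c⁻¹ * ((n:ℝ)+1)) from (Int.self_sub_fract _).symm]
  rw [mul_inv]
  ring

lemma phi_eq (c d : ℝ) (k n : ℕ) (hn : 1 ≤ n) :
    ∀ᵐ t ∂(volume : Measure ℝ), t ∈ Set.uIoc (n:ℝ) ((n:ℝ)+1) →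
      phi c d k t = A c d k n * t ^ (-2 : ℤ) := by
  have h1 : ∀ᵐ t ∂(volume : Measure ℝ), t ≠ (n:ℝ)+1 := by
    rw [ae_iff]
    simpa using measure_singleton ((n:ℝ)+1)
  filter_upwards [h1] with t ht ht2
  rw [Set.uIoc_of_le (by linarith)] at ht2
  have hfl : ⌊t⌋ = (n : ℤ) := by
    rw [Int.floor_eq_iff]
    constructor
    · exact_mod_cast le_of_lt ht2.1
    · push_cast
      exact lt_of_le_of_ne ht2.2 ht
  unfold phi
  rw [hfl]
  have ht0 : t ≠ 0 := by
    have : (1:ℝ) ≤ (n:ℝ) := by exact_mod_cast hn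
    have := ht2.1
    intro h; rw [h] at this; linarith
  rw [zpow_neg, ← div_eq_mul_inv]
  norm_num
  rfl

lemma phi_ae (c d : ℝ) (k n : ℕ) (hn : 1 ≤ n) :
    phi c d k =ᵐ[volume.restrict (Set.uIoc (n:ℝ) ((n:ℝ)+1))]
      fun t => A c d k n * t ^ (-2 : ℤ) := by
  filter_upwards [ae_restrict_of_ae (phi_eq c d k n hn),
    ae_restrict_mem measurableSet_uIoc] with t h1 h2
  exact h1 h2

lemma integrable_aux (c d : ℝ) (k n : ℕ) (hn : 1 ≤ n) :
    IntervalIntegrable (phi c d k) volume (n:ℝ) ((n:ℝ)+1) := by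
  have hcont : IntervalIntegrable (fun t : ℝ => A c d k n * t ^ (-2:ℤ)) volume (n:ℝ) ((n:ℝ)+1) := by
    apply ContinuousOn.intervalIntegrable
    apply ContinuousOn.mul continuousOn_const
    intro t ht
    rw [Set.uIcc_of_le (by linarith)] at ht
    have hn1 : (1:ℝ) ≤ (n:ℝ) := by exact_mod_cast hn
    have ht0 : t ≠ 0 := by intro h; rw [h] at ht; have := ht.1; linarith
    exact (continuousAt_zpow₀ t (-2) (Or.inl ht0)).continuousWithinAt
  exact hcont.congr_ae (phi_ae c d k n hn).symm

lemma integral_step (c d : ℝ) (k n : ℕ) (hn : 1 ≤ n) :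
    ∫ t in ((n:ℝ))..((n:ℝ)+1), phi c d k t = A c d k n / (((n:ℝ))*((n:ℝ)+1)) := by
  have hn1 : (1:ℝ) ≤ (n:ℝ) := by exact_mod_cast hn
  rw [intervalIntegral.integral_congr_ae (phi_eq c d k n hn)]
  rw [intervalIntegral.integral_const_mul]
  rw [integral_zpow (Or.inr ⟨by norm_num, by
    rw [Set.uIcc_of_le (by linarith)]
    intro h
    exact absurd h.1 (by push_neg; linarith)⟩)]
  norm_num
  have h1 : (n:ℝ) ≠ 0 := by linarith
  have h2 : (n:ℝ)+1 ≠ 0 := by linarith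
  field_simp
  ring_nf

end Stmt11Aux

namespace Stmt11Aux

lemma integral_sum (c d : ℝ) (k N : ℕ) :
    ∫ t in (1:ℝ)..((N:ℝ)+1), phi c d k t
      = ∑ i ∈ range N, A c d k (i+1) / (((i:ℝ)+1)*((i:ℝ)+2)) := by
  have key := intervalIntegral.sum_integral_adjacent_intervals
    (a := fun i : ℕ => ((i:ℝ)+1)) (n := N) (f := phi c d k) (μ := volume) ?_
  · rw [show ((0:ℕ):ℝ)+1 = (1:ℝ) by norm_num] at key
    rw [← key]
    apply sum_congr rfl
    intro i _
    have h := integral_step c d k (i+1) (by omega)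
    push_cast at h ⊢
    convert h using 2 <;> push_cast <;> ring
  · intro i _
    have h := integrable_aux c d k (i+1) (by omega)
    push_cast at h ⊢
    convert h using 2 <;> push_cast <;> ring

lemma sum_inv_succ (N : ℕ) :
    ∑ i ∈ range N, (1:ℝ)/(((i:ℝ)+1)*((i:ℝ)+2)) = 1 - 1/((N:ℝ)+1) := by
  induction N with
  | zero => simp
  | succ n ih =>
    rw [sum_range_succ, ih]
    push_cast
    have h1 : ((n:ℝ)+1) ≠ 0 := by positivity
    have h2 : ((n:ℝ)+2) ≠ 0 := by positivity
    field_simp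
    ring

lemma sum_harm (N : ℕ) :
    ∑ i ∈ range N, (((i:ℝ)+2))/(((i:ℝ)+1)*((i:ℝ)+2)) = (harmonic N : ℝ) := by
  rw [harmonic]
  push_cast
  apply sum_congr rfl
  intro i _
  have h1 : ((i:ℝ)+1) ≠ 0 := by positivity
  have h2 : ((i:ℝ)+2) ≠ 0 := by positivity
  field_simp

lemma harmonic_est (N : ℕ) (hN : 1 ≤ N) :
    |(harmonic N : ℝ) - Real.log N - eulerMascheroniConstant| ≤ 1/N := by
  have h1 := Real.eulerMascheroniSeq_lt_eulerMascheroniConstant N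
  have h2 := Real.eulerMascheroniConstant_lt_eulerMascheroniSeq' N
  rw [Real.eulerMascheroniSeq] at h1
  rw [Real.eulerMascheroniSeq', if_neg (by omega)] at h2
  have hN' : (0:ℝ) < N := by exact_mod_cast hN
  have hlog : Real.log ((N:ℝ)+1) - Real.log N ≤ 1/N := by
    rw [← Real.log_div (by positivity) (by positivity)]
    have hx := Real.log_le_sub_one_of_pos (x := ((N:ℝ)+1)/N) (by positivity)
    have : ((N:ℝ)+1)/N - 1 = 1/N := by field_simp; ring
    linarith
  have hlog2 : Real.log (N:ℝ) ≤ Real.log ((N:ℝ)+1) :=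
    Real.log_le_log (by positivity) (by linarith)
  rw [abs_le]
  constructor <;> push_cast at h1 h2 ⊢ <;> linarith

end Stmt11Aux

namespace Stmt11Aux

noncomputable def G (c d : ℝ) (k : ℕ) (n : ℕ) : ℝ :=
  (d⁻¹ * Int.fract (c⁻¹ * ((n : ℝ) + 2))
    + Int.fract (d⁻¹ * ((⌊((n : ℝ) + 2) / c⌋ : ℝ) + (k : ℝ) + 1)))
    / (((n : ℝ) + 1) * ((n : ℝ) + 2))

lemma G_eq (c d : ℝ) (k n : ℕ) :
    G c d k n = E c d k (n+1) / (((n:ℝ)+1)*((n:ℝ)+2)) := by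
  unfold G E
  have h : ((n:ℝ)+2)/c = c⁻¹ * (((n+1:ℕ):ℝ)+1) := by
    push_cast; rw [div_eq_inv_mul]; ring_nf
  rw [h]
  have h2 : c⁻¹ * ((n:ℝ)+2) = c⁻¹ * (((n+1:ℕ):ℝ)+1) := by push_cast; ring_nf
  rw [h2]

lemma E_nonneg (c d : ℝ) (hd1 : 1 < d) (k n : ℕ) : 0 ≤ E c d k n := by
  unfold E
  have := Int.fract_nonneg (c⁻¹ * ((n : ℝ) + 1))
  have := Int.fract_nonneg (d⁻¹ * ((⌊c⁻¹ * ((n : ℝ) + 1)⌋ : ℝ) + (k : ℝ) + 1))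
  have : (0:ℝ) ≤ d⁻¹ := by positivity
  positivity

lemma E_le_two (c d : ℝ) (hd1 : 1 < d) (k n : ℕ) : E c d k n ≤ 2 := by
  unfold E
  have f1 := Int.fract_lt_one (c⁻¹ * ((n : ℝ) + 1))
  have f1' := Int.fract_nonneg (c⁻¹ * ((n : ℝ) + 1))
  have f2 := Int.fract_lt_one (d⁻¹ * ((⌊c⁻¹ * ((n : ℝ) + 1)⌋ : ℝ) + (k : ℝ) + 1))
  have hd : d⁻¹ ≤ 1 := by
    rw [inv_le_one_iff₀]; right; linarith
  have : d⁻¹ * Int.fract (c⁻¹ * ((n : ℝ) + 1)) ≤ 1 := by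
    calc d⁻¹ * Int.fract (c⁻¹ * ((n : ℝ) + 1)) ≤ 1 * 1 := by
          apply mul_le_mul hd (le_of_lt f1) f1' zero_le_one
      _ = 1 := by norm_num
  linarith

lemma G_nonneg (c d : ℝ) (hd1 : 1 < d) (k n : ℕ) : 0 ≤ G c d k n := by
  rw [G_eq]
  apply div_nonneg (E_nonneg c d hd1 k (n+1))
  positivity

lemma G_le (c d : ℝ) (hd1 : 1 < d) (k n : ℕ) :
    G c d k n ≤ 2 / (((n:ℝ)+1)*((n:ℝ)+2)) := by
  rw [G_eq]
  gcongr
  exact E_le_two c d hd1 k (n+1)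

lemma summable_G (c d : ℝ) (hd1 : 1 < d) (k : ℕ) : Summable (G c d k) := by
  apply Summable.of_nonneg_of_le (G_nonneg c d hd1 k) (G_le c d hd1 k)
  have h0 : Summable (fun n : ℕ => 1 / (n:ℝ) ^ 2) :=
    Real.summable_one_div_nat_pow.mpr one_lt_two
  have h1 : Summable (fun n : ℕ => 1 / ((n:ℝ)+1) ^ 2) := by
    have := (summable_nat_add_iff 1).mpr h0
    simpa using this
  have h : Summable (fun n : ℕ => 2 * (1 / ((n:ℝ)+1) ^ 2)) := h1.mul_left 2
  apply h.of_nonneg_of_le (fun n => by positivity)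
  intro n
  rw [div_eq_mul_inv, mul_one_div, div_eq_mul_inv]
  apply mul_le_mul_of_nonneg_left ?_ (by norm_num)
  apply inv_anti₀ (by positivity)
  nlinarith [sq_nonneg ((n:ℝ)+1)]

end Stmt11Aux

namespace Stmt11Aux

lemma sum_shift (N K : ℕ) :
    ∑ i ∈ range K, (1:ℝ)/(((N:ℝ)+(i:ℝ)+1)*((N:ℝ)+(i:ℝ)+2))
      = 1/((N:ℝ)+1) - 1/((N:ℝ)+(K:ℝ)+1) := by
  induction K with
  | zero => simp
  | succ n ih =>
    rw [sum_range_succ, ih]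
    push_cast
    have h1 : ((N:ℝ)+(n:ℝ)+1) ≠ 0 := by positivity
    have h2 : ((N:ℝ)+(n:ℝ)+2) ≠ 0 := by positivity
    have h3 : ((N:ℝ)+(n:ℝ)+1+1) ≠ 0 := by positivity
    field_simp
    ring

set_option maxHeartbeats 1000000 in
lemma tail_bound (c d : ℝ) (hd1 : 1 < d) (k N : ℕ) :
    ∑' i : ℕ, G c d k (i + N) ≤ 2/((N:ℝ)+1) := by
  have hs : Summable (fun i : ℕ => G c d k (i + N)) :=
    (summable_nat_add_iff N).mpr (summable_G c d hd1 k)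
  refine Summable.tsum_le_of_sum_le hs fun s => ?_
  obtain ⟨K, hK⟩ := s.exists_nat_subset_range
  calc ∑ i ∈ s, G c d k (i+N)
      ≤ ∑ i ∈ range K, G c d k (i+N) :=
        sum_le_sum_of_subset_of_nonneg hK (fun i _ _ => G_nonneg c d hd1 k _)
    _ ≤ ∑ i ∈ range K, 2 * ((1:ℝ)/(((N:ℝ)+(i:ℝ)+1)*((N:ℝ)+(i:ℝ)+2))) := by
        apply sum_le_sum
        intro i _
        have h := G_le c d hd1 k (i+N)
        rw [mul_one_div]
        refine le_trans h (le_of_eq ?_)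
        push_cast
        ring_nf
    _ = 2 * (1/((N:ℝ)+1) - 1/((N:ℝ)+(K:ℝ)+1)) := by rw [← mul_sum, sum_shift]
    _ ≤ 2/((N:ℝ)+1) := by
        have h4 : (0:ℝ) < (N:ℝ)+(K:ℝ)+1 := by positivity
        have h5 : (0:ℝ) ≤ 1/((N:ℝ)+(K:ℝ)+1) := by positivity
        have h6 : (0:ℝ) < (N:ℝ)+1 := by positivity
        have h7 : (0:ℝ) < 1/((N:ℝ)+1) := by positivity
        have h8 : 2/((N:ℝ)+1) = 2*(1/((N:ℝ)+1)) := by rw [mul_one_div]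
        rw [h8]
        nlinarith

lemma tail_nonneg (c d : ℝ) (hd1 : 1 < d) (k N : ℕ) :
    0 ≤ ∑' i : ℕ, G c d k (i + N) :=
  tsum_nonneg (fun i => G_nonneg c d hd1 k _)

end Stmt11Aux

namespace Stmt11Aux

lemma sum_decomp (c d : ℝ) (hc0 : c ≠ 0) (hd0 : d ≠ 0) (k N : ℕ) :
    ∑ i ∈ range N, A c d k (i+1) / (((i:ℝ)+1)*((i:ℝ)+2))
      = (c*d)⁻¹ * (harmonic N : ℝ) + d⁻¹*((k:ℝ)+1) * (1 - 1/((N:ℝ)+1))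
        - ∑ i ∈ range N, G c d k i := by
  rw [← sum_harm, ← sum_inv_succ, mul_sum, mul_sum, ← sum_add_distrib, ← sum_sub_distrib]
  apply sum_congr rfl
  intro i _
  rw [A_eq, G_eq]
  set e := E c d k (i+1) with he
  have h1 : ((i:ℝ)+1) ≠ 0 := by positivity
  have h2 : ((i:ℝ)+2) ≠ 0 := by positivity
  push_cast
  field_simp
  ring

end Stmt11Aux

namespace Stmt11Aux

lemma main_est (c d : ℝ) (hc1 : 1 < c) (hd1 : 1 < d) (k m : ℕ)
    (hm : 2/(c-1) ≤ (m:ℝ)) (hm1 : 1 ≤ m) :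
    |(∫ t in (1:ℝ)..((⌊c * (m : ℝ)⌋ : ℤ) : ℝ), phi c d k t)
      - ((c * d)⁻¹ * (Real.log m + Real.log c + Real.eulerMascheroniConstant)
          + d⁻¹ * ((k : ℝ) + 1) - ∑' n : ℕ, G c d k n)|
      ≤ (3*(c*d)⁻¹ + (k:ℝ) + 3) / m := by
  have hc0 : (0:ℝ) < c := by linarith
  have hd0 : (0:ℝ) < d := by linarith
  have hm0 : (1:ℝ) ≤ (m:ℝ) := by exact_mod_cast hm1
  have hcm : (m:ℝ) + 2 ≤ c * m := by
    have h1 : (0:ℝ) < c - 1 := by linarith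
    have h2 : 2 ≤ (c-1) * m := by
      have := mul_le_mul_of_nonneg_left hm (le_of_lt h1)
      rw [mul_div_cancel₀ _ (ne_of_gt h1)] at this
      linarith
    nlinarith
  set x : ℤ := ⌊c * (m:ℝ)⌋ with hxdef
  have hx1 : (x:ℝ) ≤ c * m := Int.floor_le _
  have hx2 : c * m < (x:ℝ) + 1 := Int.lt_floor_add_one _
  have hxm : (m:ℝ) + 1 ≤ (x:ℝ) := by linarith
  set N : ℕ := (x-1).toNat with hNdef
  have hxN : ((N:ℤ):ℝ) = (x:ℝ) - 1 := by
    rw [hNdef]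
    rw [Int.toNat_of_nonneg (by
      have : (1:ℝ) ≤ (x:ℝ) := by linarith
      have : (1:ℤ) ≤ x := by exact_mod_cast this
      omega)]
    push_cast
    ring
  have hNR : (N:ℝ) = (x:ℝ) - 1 := by exact_mod_cast hxN
  have hNm : (m:ℝ) ≤ (N:ℝ) := by linarith
  have hN0 : (0:ℝ) < (N:ℝ) := by linarith
  have hN1 : 1 ≤ N := by exact_mod_cast show (1:ℝ) ≤ (N:ℝ) by linarith
  -- integral value
  have hIB : ((x:ℤ):ℝ) = (N:ℝ) + 1 := by rw [hNR]; ring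
  have hint : (∫ t in (1:ℝ)..((x:ℤ):ℝ), phi c d k t)
      = (c*d)⁻¹ * (harmonic N : ℝ) + d⁻¹*((k:ℝ)+1) * (1 - 1/((N:ℝ)+1))
        - ∑ i ∈ range N, G c d k i := by
    rw [hIB, integral_sum, sum_decomp c d (ne_of_gt hc0) (ne_of_gt hd0)]
  -- series split
  have hG := summable_G c d hd1 k
  have hsplit := Summable.sum_add_tsum_nat_add N hG
  -- log identities
  have hlog : Real.log m + Real.log c = Real.log (c*m) := by
    rw [Real.log_mul (ne_of_gt hc0) (by positivity)]
    ring
  -- key algebraic identity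
  have key : (∫ t in (1:ℝ)..((x:ℤ):ℝ), phi c d k t)
      - ((c * d)⁻¹ * (Real.log m + Real.log c + Real.eulerMascheroniConstant)
          + d⁻¹ * ((k : ℝ) + 1) - ∑' n : ℕ, G c d k n)
      = (c*d)⁻¹ * ((harmonic N : ℝ) - Real.log (c*m) - Real.eulerMascheroniConstant)
        - d⁻¹*((k:ℝ)+1) * (1/((N:ℝ)+1))
        + ∑' i : ℕ, G c d k (i + N) := by
    rw [hint, ← hsplit, hlog]
    ring
  rw [key]
  -- bounds
  have hH := harmonic_est N hN1
  have hNcm : (N:ℝ) ≤ c*m := by linarith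
  have hlogN : Real.log ((N:ℝ)) ≤ Real.log (c*m) := Real.log_le_log hN0 hNcm
  have hlogub : Real.log (c*m) - Real.log N ≤ 2/(N:ℝ) := by
    rw [← Real.log_div (by positivity) (ne_of_gt hN0)]
    have h := Real.log_le_sub_one_of_pos (x := (c*m)/(N:ℝ)) (by positivity)
    have h2 : (c*m)/(N:ℝ) - 1 ≤ 2/(N:ℝ) := by
      rw [div_sub_one (ne_of_gt hN0), div_le_div_iff₀ hN0 hN0]
      nlinarith
    linarith
  have habs1 : |(harmonic N : ℝ) - Real.log (c*m) - Real.eulerMascheroniConstant| ≤ 3/(N:ℝ) := by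
    have h3 : (3:ℝ)/(N:ℝ) = 1/(N:ℝ) + 2/(N:ℝ) := by ring
    rw [abs_le] at hH ⊢
    exact ⟨by linarith [hH.1, hlogub], by linarith [hH.2, hlogN]⟩
  have htail := tail_bound c d hd1 k N
  have htail0 := tail_nonneg c d hd1 k N
  have hcd : (0:ℝ) < (c*d)⁻¹ := by positivity
  have hdi : d⁻¹ ≤ 1 := by rw [inv_le_one_iff₀]; right; linarith
  have hdi0 : (0:ℝ) ≤ d⁻¹ := by positivity
  -- combine
  have hb1 : |(c*d)⁻¹ * ((harmonic N : ℝ) - Real.log (c*m) - Real.eulerMascheroniConstant)|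
      ≤ (c*d)⁻¹ * (3/(N:ℝ)) := by
    rw [abs_mul, abs_of_pos hcd]
    exact mul_le_mul_of_nonneg_left habs1 (le_of_lt hcd)
  have hb2 : |d⁻¹*((k:ℝ)+1) * (1/((N:ℝ)+1))| ≤ ((k:ℝ)+1) * (1/(N:ℝ)) := by
    have h1 : (0:ℝ) ≤ d⁻¹*((k:ℝ)+1) * (1/((N:ℝ)+1)) := by positivity
    rw [abs_of_nonneg h1]
    have h2 : (1:ℝ)/((N:ℝ)+1) ≤ 1/(N:ℝ) := by
      apply div_le_div_of_nonneg_left one_pos.le hN0 (by linarith) |>.trans_eq rfl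
    calc d⁻¹*((k:ℝ)+1) * (1/((N:ℝ)+1)) ≤ 1*((k:ℝ)+1) * (1/(N:ℝ)) := by
          apply mul_le_mul ?_ h2 (by positivity) (by positivity)
          apply mul_le_mul_of_nonneg_right hdi (by positivity)
      _ = ((k:ℝ)+1) * (1/(N:ℝ)) := by ring
  have hb3 : |∑' i : ℕ, G c d k (i + N)| ≤ 2/((N:ℝ)) := by
    rw [abs_of_nonneg htail0]
    apply htail.trans
    apply div_le_div_of_nonneg_left (by norm_num) hN0 (by linarith)
  calc |(c*d)⁻¹ * ((harmonic N : ℝ) - Real.log (c*m) - Real.eulerMascheroniConstant)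
        - d⁻¹*((k:ℝ)+1) * (1/((N:ℝ)+1)) + ∑' i : ℕ, G c d k (i + N)|
      ≤ |(c*d)⁻¹ * ((harmonic N : ℝ) - Real.log (c*m) - Real.eulerMascheroniConstant)|
        + |d⁻¹*((k:ℝ)+1) * (1/((N:ℝ)+1))| + |∑' i : ℕ, G c d k (i + N)| := by
        apply (abs_add_le _ _).trans
        apply add_le_add_left
        exact abs_sub _ _
    _ ≤ (c*d)⁻¹ * (3/(N:ℝ)) + ((k:ℝ)+1) * (1/(N:ℝ)) + 2/((N:ℝ)) := by
        exact add_le_add (add_le_add hb1 hb2) hb3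
    _ = (3*(c*d)⁻¹ + (k:ℝ) + 3) / (N:ℝ) := by field_simp; ring
    _ ≤ (3*(c*d)⁻¹ + (k:ℝ) + 3) / m := by
        apply div_le_div_of_nonneg_left ?_ (by linarith) hNm
        positivity
end Stmt11Aux

namespace Stmt11Aux

noncomputable def Dfun (c d : ℝ) (k m : ℕ) : ℝ :=
  |(∫ t in (1:ℝ)..((⌊c * (m : ℝ)⌋ : ℤ) : ℝ), phi c d k t)
    - ((c * d)⁻¹ * (Real.log m + Real.log c + Real.eulerMascheroniConstant)
        + d⁻¹ * ((k : ℝ) + 1) - ∑' n : ℕ, G c d k n)|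

end Stmt11Aux

open Stmt11Aux in
/-- For irrational `c > 1`, `d > 1` and a nonnegative integer `k`, with
`c'ₙ = ⌊n/c⌋`, there is `C > 0` such that for every positive integer `m`, with `x = ⌊c·m⌋`,
`| ∫_1^x ⌊d⁻¹(⌊c⁻¹(⌊t⌋+1)⌋+k+1)⌋/t² dt − ( (cd)⁻¹(log m + log c + γ) + d⁻¹(k+1)
  − Σ_{n≥1} ( d⁻¹{c⁻¹(n+1)} + {d⁻¹(c'_{n+1}+k+1)} )/(n(n+1)) ) | ≤ C/m`,
where the series converges. -/
theorem stmt11 (c d : ℝ) (hc : Irrational c) (hd : Irrational d)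
    (hc1 : 1 < c) (hd1 : 1 < d) (k : ℕ) :
    Summable (fun n : ℕ =>
      (d⁻¹ * Int.fract (c⁻¹ * ((n : ℝ) + 2))
        + Int.fract (d⁻¹ * ((⌊((n : ℝ) + 2) / c⌋ : ℝ) + (k : ℝ) + 1)))
        / (((n : ℝ) + 1) * ((n : ℝ) + 2))) ∧
    ∃ C : ℝ, 0 < C ∧ ∀ m : ℕ, 0 < m →
      |(∫ t in (1 : ℝ)..((⌊c * (m : ℝ)⌋ : ℤ) : ℝ),
            (⌊d⁻¹ * ((⌊c⁻¹ * ((⌊t⌋ : ℝ) + 1)⌋ : ℝ) + (k : ℝ) + 1)⌋ : ℝ) / t ^ 2)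
        - ((c * d)⁻¹ * (Real.log m + Real.log c + Real.eulerMascheroniConstant)
            + d⁻¹ * ((k : ℝ) + 1)
            - ∑' n : ℕ,
                (d⁻¹ * Int.fract (c⁻¹ * ((n : ℝ) + 2))
                  + Int.fract (d⁻¹ * ((⌊((n : ℝ) + 2) / c⌋ : ℝ) + (k : ℝ) + 1)))
                  / (((n : ℝ) + 1) * ((n : ℝ) + 2)))|
        ≤ C / m := by
  constructor
  · exact summable_G c d hd1 k
  · have hc0 : (0:ℝ) < c := by linarith
    have hd0 : (0:ℝ) < d := by linarith
    set K : ℝ := 3*(c*d)⁻¹ + (k:ℝ) + 3 with hK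
    have hK0 : 0 < K := by positivity
    set M : ℕ := ⌈2/(c-1)⌉₊ + 1 with hM
    set C : ℝ := K + 1 + ∑ j ∈ Finset.range M, (j:ℝ) * Dfun c d k j with hC
    have hD0 : ∀ j : ℕ, 0 ≤ (j:ℝ) * Dfun c d k j :=
      fun j => mul_nonneg (Nat.cast_nonneg j) (abs_nonneg _)
    have hsum0 : 0 ≤ ∑ j ∈ Finset.range M, (j:ℝ) * Dfun c d k j :=
      Finset.sum_nonneg fun j _ => hD0 j
    refine ⟨C, by rw [hC]; linarith, fun m hm => ?_⟩
    have hm0 : (0:ℝ) < (m:ℝ) := by exact_mod_cast hm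
    show Dfun c d k m ≤ C / m
    by_cases hcase : M ≤ m
    · have hmbd : 2/(c-1) ≤ (m:ℝ) := by
        have h1 : (2/(c-1)) ≤ (⌈2/(c-1)⌉₊ : ℝ) := Nat.le_ceil _
        have h2 : ((⌈2/(c-1)⌉₊ : ℕ) : ℝ) ≤ (m:ℝ) := by
          have : (⌈2/(c-1)⌉₊ : ℕ) ≤ m := by omega
          exact_mod_cast this
        linarith
      have hmain : Dfun c d k m ≤ K / m := main_est c d hc1 hd1 k m hmbd (by omega)
      have hKC : K ≤ C := by rw [hC]; linarith
      exact hmain.trans (by gcongr)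
    · push_neg at hcase
      have hle : (m:ℝ) * Dfun c d k m ≤ ∑ j ∈ Finset.range M, (j:ℝ) * Dfun c d k j :=
        Finset.single_le_sum (f := fun j : ℕ => (j:ℝ) * Dfun c d k j)
          (fun j _ => hD0 j) (Finset.mem_range.mpr hcase)
      rw [le_div_iff₀ hm0]
      calc Dfun c d k m * m = (m:ℝ) * Dfun c d k m := by ring
        _ ≤ ∑ j ∈ Finset.range M, (j:ℝ) * Dfun c d k j := hle
        _ ≤ C := by rw [hC]; linarith
end

section
/- Let c > 1 be an irrational real number, set d = 1/{c} (so d⁻¹ = {c}), and let k be a nonnegative integer. Define f(n) = ⌊(n+1)/c⌋ − ⌊n/c⌋ and g(n) = ⌊{c}(n+1)⌋ − ⌊{c}·n⌋ for positive integers n, and set c'_n = ⌊n/c⌋. There exists a constant C > 0 such that for every positive integer m, with x = ⌊m·c⌋, one has | Σ_{n=1}^x f(n)·g(⌊n/c⌋ + k + 1)/n − ( {c}/c + (cd)⁻¹(log m + log c + γ) + {d⁻¹(1+k)} − Σ_{n=1}^∞ ( d⁻¹·{c⁻¹(n+1)} + {d⁻¹(c'_{n+1} + k + 1)} ) / (n(n+1))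 ) | ≤ C/m, where γ is Euler's constant and the infinite series converges. -/
open Real Finset

private lemma tele_sum (h : ℕ → ℝ) (x : ℕ) :
    ∑ n ∈ Finset.Icc 1 x, (h (n+1) - h n) / n
      = ∑ n ∈ Finset.Icc 1 x, h (n+1) / (n * (n+1)) + h (x+1) / (x+1) - h 1 := by
  induction x with
  | zero => simp
  | succ x ih =>
    rw [Finset.sum_Icc_succ_top (by omega), Finset.sum_Icc_succ_top (by omega), ih]
    push_cast
    have hx1 : ((x:ℝ)+1) ≠ 0 := by positivity
    have hx2 : ((x:ℝ)+1+1) ≠ 0 := by positivity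
    field_simp
    ring

private lemma sum_inv_mul (x : ℕ) :
    ∑ n ∈ Finset.Icc 1 x, (1:ℝ) / (n * (n+1)) = 1 - 1/(x+1) := by
  induction x with
  | zero => simp
  | succ x ih =>
    rw [Finset.sum_Icc_succ_top (by omega), ih]
    push_cast
    have hx1 : ((x:ℝ)+1) ≠ 0 := by positivity
    have hx2 : ((x:ℝ)+1+1) ≠ 0 := by positivity
    field_simp
    ring

private lemma sum_inv_harmonic (x : ℕ) :
    ∑ n ∈ Finset.Icc 1 x, (1:ℝ) / n = (harmonic x : ℝ) := by
  induction x with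
  | zero => simp [harmonic]
  | succ x ih =>
    rw [Finset.sum_Icc_succ_top (by omega), ih, harmonic_succ]
    push_cast
    ring

private lemma hasSum_tele (y : ℕ) :
    HasSum (fun i : ℕ => (1:ℝ) / (((y:ℝ)+i+1) * ((y:ℝ)+i+2))) (1/((y:ℝ)+1)) := by
  have hpart : ∀ n : ℕ, ∑ i ∈ Finset.range n, (1:ℝ)/(((y:ℝ)+i+1)*((y:ℝ)+i+2))
      = 1/((y:ℝ)+1) - 1/((y:ℝ)+n+1) := by
    intro n
    induction n with
    | zero => simp
    | succ n ih =>
      rw [Finset.sum_range_succ, ih]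
      push_cast
      have h1 : ((y:ℝ)+n+1) ≠ 0 := by positivity
      have h2 : ((y:ℝ)+n+2) ≠ 0 := by positivity
      have h3 : ((y:ℝ)+1) ≠ 0 := by positivity
      field_simp
      ring
  rw [hasSum_iff_tendsto_nat_of_nonneg (fun i => by positivity)]
  simp_rw [hpart]
  have h1 : Filter.Tendsto (fun n : ℕ => (1:ℝ)/((y:ℝ)+n+1)) Filter.atTop (nhds 0) := by
    have h2 : Filter.Tendsto (fun n : ℕ => ((y:ℝ)+n+1)) Filter.atTop Filter.atTop := by
      have := Filter.tendsto_atTop_add_const_right Filter.atTop ((y:ℝ)+1)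
        (tendsto_natCast_atTop_atTop (R := ℝ))
      refine this.congr (fun n => by ring)
    exact h2.inv_tendsto_atTop.congr (fun n => by simp [one_div])
  simpa using (tendsto_const_nhds.sub h1)

private lemma harmonic_sub_log_bounds (x : ℕ) (hx : 0 < x) :
    0 ≤ (harmonic x : ℝ) - Real.log x - Real.eulerMascheroniConstant ∧
    (harmonic x : ℝ) - Real.log x - Real.eulerMascheroniConstant ≤ 1 / x := by
  have hxR : (0:ℝ) < x := by exact_mod_cast hx
  have h1 := Real.eulerMascheroniConstant_lt_eulerMascheroniSeq' x
  have h2 := Real.eulerMascheroniSeq_lt_eulerMascheroniConstant x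
  rw [Real.eulerMascheroniSeq'] at h1
  rw [Real.eulerMascheroniSeq] at h2
  rw [if_neg hx.ne'] at h1
  have hlog : Real.log ((x:ℝ)+1) - Real.log x ≤ 1 / x := by
    have he : Real.log ((x:ℝ)+1) - Real.log x = Real.log (((x:ℝ)+1)/x) := by
      rw [Real.log_div (by positivity) (by positivity)]
    rw [he]
    have := Real.log_le_sub_one_of_pos (show (0:ℝ) < ((x:ℝ)+1)/x by positivity)
    have hx' : ((x:ℝ)+1)/x - 1 = 1/x := by field_simp; ring
    linarith
  exact ⟨by linarith, by linarith⟩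

set_option maxHeartbeats 2000000 in
/-- For irrational `c > 1`, `d = 1/{c}`, and a nonnegative integer `k`, with
`f(n) = ⌊(n+1)/c⌋ − ⌊n/c⌋`, `g(n) = ⌊{c}(n+1)⌋ − ⌊{c}·n⌋` and `c'ₙ = ⌊n/c⌋`, there is
`C > 0` such that for every positive integer `m`, with `x = ⌊m·c⌋`,
`| Σ_{n=1}^x f(n)·g(⌊n/c⌋+k+1)/n − ( {c}/c + (cd)⁻¹(log m + log c + γ) + {d⁻¹(1+k)}
  − Σ_{n≥1} ( d⁻¹{c⁻¹(n+1)} + {d⁻¹(c'_{n+1}+k+1)} )/(n(n+1)) ) | ≤ C/m`,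
where the series converges. -/
theorem stmt13 (c d : ℝ) (hc : Irrational c) (hc1 : 1 < c)
    (hd : d = 1 / Int.fract c) (k : ℕ)
    (f g : ℤ → ℤ)
    (hf : ∀ n : ℤ, 0 < n → f n = ⌊((n : ℝ) + 1) / c⌋ - ⌊(n : ℝ) / c⌋)
    (hg : ∀ n : ℤ, 0 < n → g n = ⌊Int.fract c * ((n : ℝ) + 1)⌋ - ⌊Int.fract c * (n : ℝ)⌋) :
    Summable (fun n : ℕ =>
      (d⁻¹ * Int.fract (c⁻¹ * ((n : ℝ) + 2))
        + Int.fract (d⁻¹ * ((⌊((n : ℝ) + 2) / c⌋ : ℝ) + (k : ℝ) + 1)))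
        / (((n : ℝ) + 1) * ((n : ℝ) + 2))) ∧
    ∃ C : ℝ, 0 < C ∧ ∀ m : ℕ, 0 < m →
      |(∑ n ∈ Finset.Icc 1 ⌊(m : ℝ) * c⌋.toNat,
            ((f n * g (⌊(n : ℝ) / c⌋ + k + 1) : ℤ) : ℝ) / (n : ℝ))
        - (Int.fract c / c
            + (c * d)⁻¹ * (Real.log m + Real.log c + Real.eulerMascheroniConstant)
            + Int.fract (d⁻¹ * (1 + (k : ℝ)))
            - ∑' n : ℕ,
                (d⁻¹ * Int.fract (c⁻¹ * ((n : ℝ) + 2))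
                  + Int.fract (d⁻¹ * ((⌊((n : ℝ) + 2) / c⌋ : ℝ) + (k : ℝ) + 1)))
                  / (((n : ℝ) + 1) * ((n : ℝ) + 2)))|
        ≤ C / m := by
  have hc0 : (0:ℝ) < c := by linarith
  have hαnn := Int.fract_nonneg c
  have hα1 : Int.fract c < 1 := Int.fract_lt_one c
  have hαpos : 0 < Int.fract c := by
    rcases eq_or_lt_of_le hαnn with h0 | h0
    · exfalso
      apply hc.ne_int ⌊c⌋
      have h3 := Int.fract_add_floor c
      rw [← h0] at h3
      linarith
    · exact h0
  have hdinv : d⁻¹ = Int.fract c := by rw [hd, one_div, inv_inv]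
  have hcd : (c*d)⁻¹ = Int.fract c / c := by
    rw [mul_inv, hdinv, mul_comm, div_eq_mul_inv]
  rw [hcd, hdinv]
  set al := Int.fract c with hal
  set u : ℕ → ℝ := fun n =>
      (al * Int.fract (c⁻¹ * ((n : ℝ) + 2))
        + Int.fract (al * ((⌊((n : ℝ) + 2) / c⌋ : ℝ) + (k : ℝ) + 1)))
        / (((n : ℝ) + 1) * ((n : ℝ) + 2)) with hu
  have hnum_nonneg : ∀ a b : ℝ, 0 ≤ al * Int.fract a + Int.fract b :=
    fun a b => add_nonneg (mul_nonneg hαpos.le (Int.fract_nonneg a)) (Int.fract_nonneg b)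
  have hnum_le : ∀ a b : ℝ, al * Int.fract a + Int.fract b ≤ 2 := by
    intro a b
    have h1 : al * Int.fract a ≤ 1 := by
      nlinarith [Int.fract_nonneg a, Int.fract_lt_one a]
    have h2 := (Int.fract_lt_one b).le
    linarith
  have hueq : ∀ i : ℕ, u i = (al * Int.fract (((i:ℝ)+2)/c)
      + Int.fract (al * ((⌊((i:ℝ)+2)/c⌋:ℝ) + (k:ℝ) + 1))) / (((i:ℝ)+1)*((i:ℝ)+2)) := by
    intro i
    simp only [hu, inv_mul_eq_div]
  have hu_nonneg : ∀ i : ℕ, 0 ≤ u i := by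
    intro i
    rw [hueq]
    exact div_nonneg (hnum_nonneg _ _) (by positivity)
  have hsummable : Summable u := by
    have hb : Summable (fun n : ℕ => 2 * ((1:ℝ) / ((((0:ℕ):ℝ)+n+1) * (((0:ℕ):ℝ)+n+2)))) :=
      ((hasSum_tele 0).mul_left 2).summable
    refine Summable.of_nonneg_of_le hu_nonneg (fun n => ?_) hb
    have a1 : ((n:ℝ)+1) ≠ 0 := by positivity
    have a2 : ((n:ℝ)+2) ≠ 0 := by positivity
    have h2 : 2 * ((1:ℝ) / ((((0:ℕ):ℝ)+n+1) * (((0:ℕ):ℝ)+n+2))) = 2 / (((n:ℝ)+1)*((n:ℝ)+2)) := by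
      push_cast
      field_simp
      ring
    rw [hueq, h2]
    gcongr
    exact hnum_le _ _
  refine ⟨hsummable, 6, by norm_num, fun m hm => ?_⟩
  -- setup for a fixed m
  have hm1R : (1:ℝ) ≤ (m:ℝ) := by exact_mod_cast hm
  have hmR : (0:ℝ) < (m:ℝ) := by linarith
  have hmc1 : (1:ℝ) ≤ (m:ℝ)*c := by nlinarith
  set X : ℤ := ⌊(m:ℝ) * c⌋ with hX
  set x : ℕ := X.toNat with hxdef
  have hX1 : 1 ≤ X := by
    rw [hX]; exact Int.le_floor.mpr (by exact_mod_cast hmc1)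
  have hxX : (x:ℤ) = X := Int.toNat_of_nonneg (by omega)
  have hxR : (x:ℝ) = (X:ℝ) := by exact_mod_cast hxX
  have hx_le : (x:ℝ) ≤ (m:ℝ)*c := by rw [hxR, hX]; exact Int.floor_le _
  have hx_gt : (m:ℝ)*c - 1 < (x:ℝ) := by rw [hxR, hX]; exact Int.sub_one_lt_floor _
  have hmx : m ≤ x := by
    have h1 : (m:ℤ) ≤ X := by
      rw [hX]; exact Int.le_floor.mpr (by push_cast; nlinarith)
    omega
  have hx0 : 0 < x := by omega
  have hxRpos : (0:ℝ) < (x:ℝ) := by exact_mod_cast hx0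
  have hmxR : (m:ℝ) ≤ (x:ℝ) := by exact_mod_cast hmx
  set hfun : ℕ → ℝ := fun n => ((⌊al * ((⌊(n:ℝ)/c⌋:ℝ) + (k:ℝ) + 1)⌋ : ℤ) : ℝ) with hhfun
  set t : ℕ → ℝ := fun n =>
    al * Int.fract (((n:ℝ)+1)/c)
      + Int.fract (al * ((⌊((n:ℝ)+1)/c⌋:ℝ) + (k:ℝ) + 1)) with ht
  -- pointwise identity
  have key : ∀ n ∈ Finset.Icc 1 x,
      ((f n * g (⌊(n : ℝ) / c⌋ + k + 1) : ℤ) : ℝ) / (n : ℝ)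
        = (hfun (n+1) - hfun n) / (n : ℝ) := by
    intro n hn
    have hn1 : 1 ≤ n := (Finset.mem_Icc.mp hn).1
    have hnZ : (0:ℤ) < (n:ℤ) := by exact_mod_cast hn1
    have hcastR : ((n+1:ℕ):ℝ) = (n:ℝ)+1 := by push_cast; ring
    have hfe : f n = ⌊((n:ℝ)+1)/c⌋ - ⌊(n:ℝ)/c⌋ := by
      have h3 := hf n hnZ
      push_cast at h3
      exact h3
    have hmono : ⌊(n:ℝ)/c⌋ ≤ ⌊((n:ℝ)+1)/c⌋ := by
      apply Int.floor_le_floor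
      gcongr
      linarith
    have hstep : ⌊((n:ℝ)+1)/c⌋ ≤ ⌊(n:ℝ)/c⌋ + 1 := by
      have h1 : ((n:ℝ)+1)/c ≤ (n:ℝ)/c + 1 := by
        have h2 : ((n:ℝ)+1)/c - (n:ℝ)/c = 1/c := by ring
        have h4 : 1/c ≤ 1 := by
          rw [div_le_one hc0]; linarith
        linarith
      calc ⌊((n:ℝ)+1)/c⌋ ≤ ⌊(n:ℝ)/c + 1⌋ := Int.floor_le_floor h1
      _ = ⌊(n:ℝ)/c⌋ + 1 := by
          rw [show ((n:ℝ)/c + 1) = ((n:ℝ)/c + (1:ℤ)) by push_cast; ring, Int.floor_add_intCast]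
    rcases (by omega : ⌊((n:ℝ)+1)/c⌋ = ⌊(n:ℝ)/c⌋ ∨ ⌊((n:ℝ)+1)/c⌋ = ⌊(n:ℝ)/c⌋ + 1)
      with hcase | hcase
    · have hf0 : f n = 0 := by rw [hfe, hcase]; ring
      rw [hf0]
      simp only [hhfun, hcastR, hcase]
      push_cast
      ring
    · have hf1 : f n = 1 := by rw [hfe, hcase]; ring
      have hkZ : (0:ℤ) ≤ (k:ℤ) := Int.natCast_nonneg k
      have hc'nn : (0:ℤ) ≤ ⌊(n:ℝ)/c⌋ := Int.floor_nonneg.mpr (by positivity)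
      have harg : (0:ℤ) < ⌊(n:ℝ)/c⌋ + k + 1 := by omega
      have hge := hg _ harg
      rw [hf1, hge]
      simp only [hhfun, hcastR, hcase]
      push_cast
      ring_nf
  -- decomposition of hfun (n+1)
  have hdecomp : ∀ n : ℕ, hfun (n+1) = al/c*((n:ℝ)+1) + al*((k:ℝ)+1) - t n := by
    intro n
    have hcastR : ((n+1:ℕ):ℝ) = (n:ℝ)+1 := by push_cast; ring
    simp only [hhfun, ht, hcastR]
    have e1 : ((⌊al * ((⌊((n:ℝ)+1)/c⌋:ℝ) + (k:ℝ) + 1)⌋ : ℤ) : ℝ)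
        = al * ((⌊((n:ℝ)+1)/c⌋:ℝ) + (k:ℝ) + 1)
          - Int.fract (al * ((⌊((n:ℝ)+1)/c⌋:ℝ) + (k:ℝ) + 1)) :=
      (Int.self_sub_fract _).symm
    have e2 : ((⌊((n:ℝ)+1)/c⌋ : ℤ) : ℝ) = ((n:ℝ)+1)/c - Int.fract (((n:ℝ)+1)/c) :=
      (Int.self_sub_fract _).symm
    rw [e1]
    linear_combination al * e2
  -- sum of hfun (n+1) / (n(n+1))
  have hsum2 : ∑ n ∈ Finset.Icc 1 x, hfun (n+1) / ((n:ℝ) * ((n:ℝ)+1))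
      = al/c * (harmonic x : ℝ) + al*((k:ℝ)+1) * (1 - 1/((x:ℝ)+1))
        - ∑ n ∈ Finset.Icc 1 x, t n / ((n:ℝ) * ((n:ℝ)+1)) := by
    have hpt : ∀ n ∈ Finset.Icc 1 x, hfun (n+1) / ((n:ℝ) * ((n:ℝ)+1))
        = al/c * ((1:ℝ)/(n:ℝ)) + al*((k:ℝ)+1) * ((1:ℝ)/((n:ℝ)*((n:ℝ)+1)))
          - t n / ((n:ℝ) * ((n:ℝ)+1)) := by
      intro n hn
      have hn1 : 1 ≤ n := (Finset.mem_Icc.mp hn).1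
      have hnR : (0:ℝ) < (n:ℝ) := by exact_mod_cast hn1
      have hnR1 : (0:ℝ) < (n:ℝ)+1 := by linarith
      rw [hdecomp n]
      field_simp
    rw [Finset.sum_congr rfl hpt, Finset.sum_sub_distrib, Finset.sum_add_distrib,
      ← Finset.mul_sum, ← Finset.mul_sum, sum_inv_harmonic, sum_inv_mul]
  -- partial sum of t vs u
  have hre : ∑ n ∈ Finset.Icc 1 x, t n / ((n:ℝ) * ((n:ℝ)+1)) = ∑ i ∈ Finset.range x, u i := by
    rw [← Finset.Ico_add_one_right_eq_Icc, Finset.sum_Ico_eq_sum_range]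
    have hxx : x + 1 - 1 = x := by omega
    rw [hxx]
    apply Finset.sum_congr rfl
    intro i _
    have h1 : ((1+i:ℕ):ℝ) = (i:ℝ)+1 := by push_cast; ring
    have h2 : (i:ℝ)+1+1 = (i:ℝ)+2 := by ring
    simp only [ht, h1, h2, hueq]
  -- tsum split and tail bounds
  have hsplit := Summable.sum_add_tsum_nat_add x hsummable
  set tail := ∑' i : ℕ, u (i + x) with htail
  have hpartial : ∑ i ∈ Finset.range x, u i = (∑' n : ℕ, u n) - tail := by
    rw [← hsplit]; ring
  have htail0 : 0 ≤ tail := tsum_nonneg (fun i => hu_nonneg _)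
  have htail2 : tail ≤ 2/((x:ℝ)+1) := by
    have hb2 := (hasSum_tele x).mul_left 2
    have hle : ∀ i : ℕ, u (i + x) ≤ 2 * ((1:ℝ) / (((x:ℝ)+i+1) * ((x:ℝ)+i+2))) := by
      intro i
      have hDeq : ((((i+x):ℕ):ℝ)+1)*((((i+x):ℕ):ℝ)+2) = ((x:ℝ)+i+1)*((x:ℝ)+i+2) := by
        push_cast; ring
      rw [hueq, hDeq, mul_one_div]
      gcongr
      exact hnum_le _ _
    have := Summable.tsum_le_tsum hle ((summable_nat_add_iff x).mpr hsummable) hb2.summable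
    rw [hb2.tsum_eq] at this
    rw [htail]
    calc ∑' i : ℕ, u (i + x) ≤ 2 * (1/((x:ℝ)+1)) := this
    _ = 2/((x:ℝ)+1) := by rw [mul_one_div]
  -- endpoint terms
  have hx1e : hfun (x+1) / ((x:ℝ)+1) = al/c + (al*((k:ℝ)+1) - t x)/((x:ℝ)+1) := by
    rw [hdecomp x]
    have : ((x:ℝ)+1) ≠ 0 := by positivity
    field_simp
    ring
  have h1e : hfun 1 = al*((k:ℝ)+1) - Int.fract (al*((k:ℝ)+1)) := by
    have hc'1 : ⌊(1:ℝ)/c⌋ = 0 := by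
      rw [Int.floor_eq_zero_iff]
      constructor
      · positivity
      · rw [div_lt_one hc0]; linarith
    have hone : ((1:ℕ):ℝ) = (1:ℝ) := by norm_num
    simp only [hhfun, hone, hc'1]
    have harg : al * (((0:ℤ):ℝ) + (k:ℝ) + 1) = al * ((k:ℝ)+1) := by push_cast; ring
    rw [harg]
    exact (Int.self_sub_fract _).symm
  -- fract arg commutation
  have hfr : Int.fract (al * (1 + (k:ℝ))) = Int.fract (al * ((k:ℝ)+1)) := by
    ring_nf
  -- log bounds
  have hlogmc : Real.log ((m:ℝ)*c) = Real.log m + Real.log c :=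
    Real.log_mul (by positivity) (by positivity)
  have hlog1 : Real.log x ≤ Real.log ((m:ℝ)*c) := Real.log_le_log hxRpos hx_le
  have hlog2 : Real.log ((m:ℝ)*c) - Real.log x ≤ 1/(m:ℝ) := by
    have h1 : Real.log ((m:ℝ)*c) - Real.log x = Real.log ((m:ℝ)*c/(x:ℝ)) := by
      rw [Real.log_div (by positivity) (by positivity)]
    have h2 := Real.log_le_sub_one_of_pos (show (0:ℝ) < (m:ℝ)*c/(x:ℝ) by positivity)
    have h3 : (m:ℝ)*c/(x:ℝ) - 1 = ((m:ℝ)*c - (x:ℝ))/(x:ℝ) := by field_simp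
    have h4 : ((m:ℝ)*c - (x:ℝ))/(x:ℝ) ≤ 1/(x:ℝ) := by
      gcongr
      linarith
    have h5 : 1/(x:ℝ) ≤ 1/(m:ℝ) := by gcongr
    linarith
  obtain ⟨hH0, hH1⟩ := harmonic_sub_log_bounds x hx0
  have hHm : (harmonic x : ℝ) - Real.log x - Real.eulerMascheroniConstant ≤ 1/(m:ℝ) := by
    have h5 : 1/(x:ℝ) ≤ 1/(m:ℝ) := by gcongr
    linarith
  -- t x bounds
  have htx0 : 0 ≤ t x := by rw [ht]; exact hnum_nonneg _ _
  have htx2 : t x ≤ 2 := by rw [ht]; exact hnum_le _ _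
  -- al/c bounds
  have hac0 : 0 ≤ al/c := by positivity
  have hac1 : al/c ≤ 1 := by
    rw [div_le_one hc0]; linarith
  -- main algebraic identity
  have hgoal : (∑ n ∈ Finset.Icc 1 x,
        ((f n * g (⌊(n : ℝ) / c⌋ + k + 1) : ℤ) : ℝ) / (n : ℝ))
      - (al / c
          + al / c * (Real.log m + Real.log c + Real.eulerMascheroniConstant)
          + Int.fract (al * (1 + (k:ℝ)))
          - ∑' n : ℕ, u n)
      = al/c * ((harmonic x : ℝ) - Real.log x - Real.eulerMascheroniConstant)
        + al/c * (Real.log x - Real.log m - Real.log c)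
        + tail - t x / ((x:ℝ)+1) := by
    rw [Finset.sum_congr rfl key, tele_sum, hsum2, hre, hpartial, hx1e, h1e, hfr]
    ring
  rw [hgoal]
  clear hgoal hre hpartial hx1e h1e hfr hsum2 hdecomp key hsplit hueq hu_nonneg hsummable hf hg
  clear_value u hfun t tail X x al
  set E1 := (harmonic x : ℝ) - Real.log x - Real.eulerMascheroniConstant with hE1
  set E2 := Real.log x - Real.log (m:ℝ) - Real.log c with hE2
  clear_value E1 E2
  have hE2a : -(1/(m:ℝ)) ≤ E2 := by rw [hE2]; linarith
  have hE2b : E2 ≤ 0 := by rw [hE2]; linarith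
  have hb1 : 0 ≤ al/c * E1 := mul_nonneg hac0 hH0
  have hb2 : al/c * E1 ≤ 1/(m:ℝ) := by
    calc al/c * E1 ≤ 1 * E1 := mul_le_mul_of_nonneg_right hac1 hH0
    _ = E1 := one_mul _
    _ ≤ 1/(m:ℝ) := hHm
  have hb3 : al/c * E2 ≤ 0 := by
    have h1 := mul_le_mul_of_nonneg_left hE2b hac0
    simpa using h1
  have hb4 : -(1/(m:ℝ)) ≤ al/c * E2 := by
    have h1 : 1 * E2 ≤ al/c * E2 := mul_le_mul_of_nonpos_right hac1 hE2b
    linarith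
  have hb5 : tail ≤ 2/(m:ℝ) := by
    have h5 : 2/((x:ℝ)+1) ≤ 2/(m:ℝ) := by
      gcongr
      linarith
    linarith
  have hb6 : t x / ((x:ℝ)+1) ≤ 2/(m:ℝ) := by
    have h5 : t x / ((x:ℝ)+1) ≤ 2/((x:ℝ)+1) := by
      exact div_le_div_of_nonneg_right htx2 (by positivity)
    have h6 : 2/((x:ℝ)+1) ≤ 2/(m:ℝ) := by
      gcongr
      linarith
    linarith
  have hb7 : 0 ≤ t x / ((x:ℝ)+1) := div_nonneg htx0 (by positivity)
  have e6 : 6/(m:ℝ) = 1/(m:ℝ) + 1/(m:ℝ) + 2/(m:ℝ) + 2/(m:ℝ) := by ring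
  have hm0 : 0 ≤ 1/(m:ℝ) := by positivity
  have h2m : 0 ≤ 2/(m:ℝ) := by positivity
  rw [abs_le]
  constructor
  · linarith only [hb1, hb2, hb3, hb4, hb5, hb6, hb7, htail0, e6, hm0, h2m]
  · linarith only [hb1, hb2, hb3, hb4, hb5, hb6, hb7, htail0, e6, hm0, h2m]
end

section
/- Let c > 1 be an irrational real number, set d = 1/{c} and q = c − {c} = ⌊c⌋, and let k be a nonnegative integer. Define f(n) = ⌊(n+1)/c⌋ − ⌊n/c⌋ and g(n) = ⌊{c}(n+1)⌋ − ⌊{c}·n⌋ for positive integers n, and set c'_n = ⌊n/c⌋. There exists a constant C > 0 such that for every positive integer m, with x = ⌊m·c⌋, one has | Σ_{n=1}^x ( q·f(n) + f(n)·g(⌊n/c⌋ + k + 1) )/n − ( 1 + log m + log c + γ + {{c}(k+1)} − Σ_{n=1}^∞ ( c·{c⁻¹(n+1)} + {{c}(c'_{n+1} + k + 1)} ) / (n(n+1)) ) | ≤ C/m, where γ is Euler's constant and the infinite series converges. -/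
open Real Finset


noncomputable def Fn (c : ℝ) (x : ℕ) : ℤ := ⌊((x:ℝ)+1)/c⌋

noncomputable def An (c : ℝ) (k : ℕ) (x : ℕ) : ℤ :=
  ⌊c⌋ * Fn c x + ⌊Int.fract c * ((Fn c x : ℝ) + (k:ℝ) + 1)⌋ - ⌊Int.fract c * ((k:ℝ) + 1)⌋

noncomputable def Bn (c : ℝ) (k : ℕ) (x : ℕ) : ℝ :=
  c * Int.fract (((x:ℝ)+1)/c) + Int.fract (Int.fract c * ((Fn c x : ℝ) + (k:ℝ) + 1))

lemma Fn_zero {c : ℝ} (hc1 : 1 < c) : Fn c 0 = 0 := by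
  have hc0 : (0:ℝ) < c := lt_trans one_pos hc1
  rw [Fn, Int.floor_eq_zero_iff]
  constructor
  · positivity
  · push_cast
    rw [zero_add, div_lt_one hc0]
    exact hc1

lemma An_zero {c : ℝ} (hc1 : 1 < c) (k : ℕ) : An c k 0 = 0 := by
  simp [An, Fn_zero hc1]

lemma Bn_nonneg {c : ℝ} (hc0 : 0 < c) (k x : ℕ) : 0 ≤ Bn c k x :=
  add_nonneg (mul_nonneg hc0.le (Int.fract_nonneg _)) (Int.fract_nonneg _)

lemma Bn_le {c : ℝ} (hc0 : 0 < c) (k x : ℕ) : Bn c k x ≤ c + 1 := by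
  have h1 : c * Int.fract (((x:ℝ)+1)/c) ≤ c * 1 :=
    mul_le_mul_of_nonneg_left (Int.fract_lt_one _).le hc0.le
  have h2 : Int.fract (Int.fract c * ((Fn c x : ℝ) + (k:ℝ) + 1)) ≤ 1 := (Int.fract_lt_one _).le
  rw [Bn]; linarith

lemma An_eq {c : ℝ} (hc0 : 0 < c) (k x : ℕ) :
    (An c k x : ℝ) = (x:ℝ) + 1 + Int.fract (Int.fract c * ((k:ℝ)+1)) - Bn c k x := by
  have h0 : ((⌊c⌋:ℤ):ℝ) = c - Int.fract c := (Int.self_sub_fract c).symm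
  have h1 : ((⌊Int.fract c * ((Fn c x : ℝ) + (k:ℝ) + 1)⌋:ℤ):ℝ)
      = Int.fract c * ((Fn c x : ℝ) + (k:ℝ) + 1)
        - Int.fract (Int.fract c * ((Fn c x : ℝ) + (k:ℝ) + 1)) := (Int.self_sub_fract _).symm
  have h2 : ((⌊Int.fract c * ((k:ℝ) + 1)⌋:ℤ):ℝ)
      = Int.fract c * ((k:ℝ) + 1) - Int.fract (Int.fract c * ((k:ℝ) + 1)) :=
    (Int.self_sub_fract _).symm
  have h3 : c * (Fn c x : ℝ) = ((x:ℝ)+1) - c * Int.fract (((x:ℝ)+1)/c) := by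
    rw [Fn, show ((⌊((x:ℝ)+1)/c⌋:ℤ):ℝ) = ((x:ℝ)+1)/c - Int.fract (((x:ℝ)+1)/c) from
      (Int.self_sub_fract _).symm, mul_sub, mul_div_cancel₀ _ (ne_of_gt hc0)]
  rw [An, Bn]
  push_cast
  rw [h1, h2, h0]
  linear_combination h3

lemma abel_aux (A : ℕ → ℝ) (term : ℕ → ℝ) (hA0 : A 0 = 0)
    (h : ∀ x : ℕ, term (x+1) = A (x+1) - A x) :
    ∀ Y : ℕ, ∑ n ∈ Icc 1 (Y+1), term n / (n:ℝ)
      = A (Y+1)/((Y:ℝ)+1) + ∑ n ∈ Icc 1 Y, A n/((n:ℝ)*((n:ℝ)+1)) := by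
  intro Y
  induction Y with
  | zero => simp [h 0, hA0]
  | succ Y ih =>
      rw [← Finset.insert_Icc_right_eq_Icc_add_one (show 1 ≤ Y+1+1 by omega),
        Finset.sum_insert (by simp), ih,
        ← Finset.insert_Icc_right_eq_Icc_add_one (show 1 ≤ Y+1 by omega),
        Finset.sum_insert (by simp), h (Y+1)]
      have h1 : ((Y:ℝ)+1) ≠ 0 := by positivity
      have h2 : ((Y:ℝ)+1+1) ≠ 0 := by positivity
      push_cast
      field_simp
      ring

lemma sum_Icc_one (h : ℕ → ℝ) : ∀ N : ℕ, ∑ n ∈ Icc 1 N, h n = ∑ i ∈ range N, h (i+1) := by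
  intro N
  induction N with
  | zero => simp
  | succ N ih =>
      rw [← Finset.insert_Icc_right_eq_Icc_add_one (show 1 ≤ N+1 by omega),
        Finset.sum_insert (by simp), ih, Finset.sum_range_succ]
      ring

lemma tele (a : ℝ) (ha : 1 ≤ a) :
    ∀ j : ℕ, ∑ i ∈ range j, (1:ℝ)/(((i:ℝ)+a)*((i:ℝ)+a+1)) = 1/a - 1/(a+(j:ℝ)) := by
  intro j
  have ha0 : 0 < a := lt_of_lt_of_le one_pos ha
  induction j with
  | zero => simp
  | succ j ih =>
      rw [Finset.sum_range_succ, ih]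
      have h1 : (0:ℝ) < (j:ℝ) + a := by positivity
      have h2 : (0:ℝ) < (j:ℝ) + a + 1 := by positivity
      have h3 : (0:ℝ) < a + (j:ℝ) := by positivity
      have h4 : (0:ℝ) < a + ((j:ℝ)+1) := by linarith
      push_cast
      field_simp
      ring

lemma harmonic_eq (N : ℕ) : ∑ n ∈ Icc 1 N, (1:ℝ)/(n:ℝ) = (harmonic N : ℝ) := by
  rw [sum_Icc_one (fun n => (1:ℝ)/(n:ℝ)) N, harmonic]
  push_cast
  simp [one_div]

lemma termEq {c : ℝ} (hc1 : 1 < c) (q : ℤ) (hq : q = ⌊c⌋) (k : ℕ) (f g : ℤ → ℤ)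
    (hf : ∀ n : ℤ, 0 < n → f n = ⌊((n : ℝ) + 1) / c⌋ - ⌊(n : ℝ) / c⌋)
    (hg : ∀ n : ℤ, 0 < n → g n = ⌊Int.fract c * ((n : ℝ) + 1)⌋ - ⌊Int.fract c * (n : ℝ)⌋)
    (x : ℕ) :
    q * f (↑(x+1)) + f (↑(x+1)) * g (⌊(((x+1:ℕ)):ℝ)/c⌋ + (k:ℤ) + 1)
      = An c k (x+1) - An c k x := by
  have hc0 : (0:ℝ) < c := lt_trans one_pos hc1
  have hcast : (((x+1:ℕ)):ℝ) = (x:ℝ)+1 := by push_cast; ring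
  have hfl : ⌊(((x+1:ℕ)):ℝ)/c⌋ = Fn c x := by rw [hcast, Fn]
  have hF : f (↑(x+1)) = Fn c (x+1) - Fn c x := by
    rw [hf (↑(x+1)) (by exact_mod_cast Nat.succ_pos x), Fn, Fn]
    push_cast
    ring_nf
  have hmono : Fn c x ≤ Fn c (x+1) := by
    apply Int.floor_le_floor
    rw [div_le_div_iff_of_pos_right hc0]
    push_cast; linarith
  have hup : Fn c (x+1) ≤ Fn c x + 1 := by
    have harg : (((x+1:ℕ):ℝ)+1)/c ≤ ((x:ℝ)+1)/c + 1 := by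
      have h5 : (((x+1:ℕ):ℝ)+1)/c = ((x:ℝ)+1)/c + 1/c := by
        push_cast; rw [add_div]
      rw [h5]
      have : 1/c ≤ 1 := by rw [div_le_one hc0]; exact hc1.le
      linarith
    calc Fn c (x+1) ≤ ⌊((x:ℝ)+1)/c + 1⌋ := Int.floor_le_floor harg
      _ = Fn c x + 1 := by rw [Int.floor_add_one, Fn]
  rcases (show Fn c (x+1) - Fn c x = 0 ∨ Fn c (x+1) - Fn c x = 1 by omega) with h | h
  · have hFF : Fn c (x+1) = Fn c x := by omega
    rw [hF, hfl, h, An, An, hFF]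
    ring
  · have hFF : Fn c (x+1) = Fn c x + 1 := by omega
    have hFpos : (0:ℤ) ≤ Fn c x := Int.floor_nonneg.2 (by positivity)
    have hgpos : (0:ℤ) < Fn c x + (k:ℤ) + 1 := by omega
    rw [hF, hfl, h, hg _ hgpos, An, An, hFF, hq]
    push_cast
    ring_nf

lemma harm_bound (X : ℕ) (hX : 1 ≤ X) :
    |(harmonic X : ℝ) - Real.log X - Real.eulerMascheroniConstant| ≤ 1/(X:ℝ) := by
  have hX0 : (0:ℝ) < (X:ℝ) := by exact_mod_cast hX
  have hlow := Real.eulerMascheroniSeq_lt_eulerMascheroniConstant X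
  have hhigh := Real.eulerMascheroniConstant_lt_eulerMascheroniSeq' X
  rw [Real.eulerMascheroniSeq] at hlow
  rw [Real.eulerMascheroniSeq', if_neg (by omega)] at hhigh
  have hlog : Real.log ((X:ℝ)+1) - Real.log X ≤ 1/(X:ℝ) := by
    rw [← Real.log_div (by positivity) (ne_of_gt hX0)]
    have h2 : ((X:ℝ)+1)/(X:ℝ) - 1 = 1/(X:ℝ)  := by field_simp; ring
    have := Real.log_le_sub_one_of_pos (show (0:ℝ) < ((X:ℝ)+1)/(X:ℝ) by positivity)
    linarith
  rw [abs_le]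
  constructor <;> nlinarith [Real.log_le_log (by positivity : (0:ℝ) < (X:ℝ))
    (show (X:ℝ) ≤ (X:ℝ)+1 by linarith)]

/-- For irrational `c > 1`, `d = 1/{c}`, `q = ⌊c⌋`, and a nonnegative integer
`k`, with `f(n) = ⌊(n+1)/c⌋ − ⌊n/c⌋`, `g(n) = ⌊{c}(n+1)⌋ − ⌊{c}·n⌋` and `c'ₙ = ⌊n/c⌋`,
there is `C > 0` such that for every positive integer `m`, with `x = ⌊m·c⌋`,
`| Σ_{n=1}^x (q·f(n) + f(n)·g(⌊n/c⌋+k+1))/n − ( 1 + log m + log c + γ + {{c}(k+1)}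
  − Σ_{n≥1} ( c{c⁻¹(n+1)} + {{c}(c'_{n+1}+k+1)} )/(n(n+1)) ) | ≤ C/m`,
where the series converges. -/
theorem stmt14 (c d : ℝ) (hc : Irrational c) (hc1 : 1 < c)
    (hd : d = 1 / Int.fract c) (q : ℤ) (hq : q = ⌊c⌋) (k : ℕ)
    (f g : ℤ → ℤ)
    (hf : ∀ n : ℤ, 0 < n → f n = ⌊((n : ℝ) + 1) / c⌋ - ⌊(n : ℝ) / c⌋)
    (hg : ∀ n : ℤ, 0 < n → g n = ⌊Int.fract c * ((n : ℝ) + 1)⌋ - ⌊Int.fract c * (n : ℝ)⌋) :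
    Summable (fun n : ℕ =>
      (c * Int.fract (c⁻¹ * ((n : ℝ) + 2))
        + Int.fract (Int.fract c * ((⌊((n : ℝ) + 2) / c⌋ : ℝ) + (k : ℝ) + 1)))
        / (((n : ℝ) + 1) * ((n : ℝ) + 2))) ∧
    ∃ C : ℝ, 0 < C ∧ ∀ m : ℕ, 0 < m →
      |(∑ n ∈ Finset.Icc 1 ⌊(m : ℝ) * c⌋.toNat,
            ((q * f n + f n * g (⌊(n : ℝ) / c⌋ + k + 1) : ℤ) : ℝ) / (n : ℝ))
        - (1 + Real.log m + Real.log c + Real.eulerMascheroniConstant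
            + Int.fract (Int.fract c * ((k : ℝ) + 1))
            - ∑' n : ℕ,
                (c * Int.fract (c⁻¹ * ((n : ℝ) + 2))
                  + Int.fract (Int.fract c * ((⌊((n : ℝ) + 2) / c⌋ : ℝ) + (k : ℝ) + 1)))
                  / (((n : ℝ) + 1) * ((n : ℝ) + 2)))|
        ≤ C / m := by
  have hc0 : (0:ℝ) < c := lt_trans one_pos hc1
  set t : ℕ → ℝ := fun n =>
      (c * Int.fract (c⁻¹ * ((n : ℝ) + 2))
        + Int.fract (Int.fract c * ((⌊((n : ℝ) + 2) / c⌋ : ℝ) + (k : ℝ) + 1)))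
        / (((n : ℝ) + 1) * ((n : ℝ) + 2)) with ht
  have hteq : ∀ n : ℕ, t n = Bn c k (n+1) / (((n:ℝ)+1)*((n:ℝ)+2)) := by
    intro n
    have e1 : c⁻¹ * ((n:ℝ)+2) = (((n+1:ℕ):ℝ)+1)/c := by
      push_cast; rw [inv_mul_eq_div]; ring_nf
    have e2 : ((n:ℝ)+2)/c = (((n+1:ℕ):ℝ)+1)/c := by push_cast; ring_nf
    rw [ht]
    simp only [Bn, Fn, e1, e2]
  have hBnn : ∀ x, 0 ≤ Bn c k x := Bn_nonneg hc0 k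
  have hBle : ∀ x, Bn c k x ≤ c + 1 := Bn_le hc0 k
  have htnn : ∀ n, 0 ≤ t n := by
    intro n
    rw [hteq]
    apply div_nonneg (hBnn _) (by positivity)
  have htle : ∀ n, t n ≤ (c+1) * (1/(((n:ℝ)+1)*((n:ℝ)+1+1))) := by
    intro n
    rw [hteq, mul_one_div]
    have h2 : ((n:ℝ)+2) = ((n:ℝ)+1+1) := by ring
    rw [h2]
    exact div_le_div_of_nonneg_right (hBle _) (by positivity)
  have hc1' : (0:ℝ) ≤ c + 1 := by linarith
  have hpartial : ∀ j : ℕ, ∀ a : ℝ, 1 ≤ a →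
      ∑ i ∈ range j, (c+1) * (1/(((i:ℝ)+a)*((i:ℝ)+a+1))) ≤ (c+1) * (1/a) := by
    intro j a ha
    rw [← Finset.mul_sum, tele a ha j]
    have h1 : 0 < a := lt_of_lt_of_le one_pos ha
    have h2 : 0 < a + (j:ℝ) := by positivity
    have h3 : 0 ≤ 1/(a+(j:ℝ)) := by positivity
    apply mul_le_mul_of_nonneg_left ?_ hc1'
    rw [one_div a]
    linarith
  have hsum : Summable t := by
    apply summable_of_sum_range_le htnn (c := (c+1) * (1/(1:ℝ)))
    intro j
    calc ∑ i ∈ range j, t i ≤ ∑ i ∈ range j, (c+1) * (1/(((i:ℝ)+1)*((i:ℝ)+1+1))) :=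
          Finset.sum_le_sum (fun i _ => htle i)
      _ ≤ (c+1) * (1/(1:ℝ)) := hpartial j 1 le_rfl
  refine ⟨hsum, 2*c+4, by linarith, ?_⟩
  intro m hm
  set X := ⌊(m : ℝ) * c⌋.toNat with hX
  have hm1 : (1:ℝ) ≤ (m:ℝ) := by exact_mod_cast hm
  have hmc1 : (1:ℝ) ≤ (m:ℝ)*c := by nlinarith
  have hfl1 : 1 ≤ ⌊(m:ℝ)*c⌋ := Int.le_floor.mpr (by exact_mod_cast hmc1)
  have hflm : (m:ℤ) ≤ ⌊(m:ℝ)*c⌋ := Int.le_floor.mpr (by push_cast; nlinarith)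
  have hX1 : 1 ≤ X := by
    have := Int.toNat_le_toNat hfl1
    simpa [hX] using this
  have hXm : m ≤ X := by
    have := Int.toNat_le_toNat hflm
    simpa [hX] using this
  have hXZ : ((X:ℕ):ℤ) = ⌊(m:ℝ)*c⌋ := Int.toNat_of_nonneg (by omega)
  have hXR : ((X:ℕ):ℝ) = ((⌊(m:ℝ)*c⌋:ℤ):ℝ) := by exact_mod_cast congrArg ((Int.cast : ℤ → ℝ)) hXZ
  have hXc : (X:ℝ) ≤ (m:ℝ)*c := by rw [hXR]; exact Int.floor_le _
  have hXgt : (m:ℝ)*c < (X:ℝ) + 1 := by rw [hXR]; exact Int.lt_floor_add_one _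
  have hXpos : (0:ℝ) < (X:ℝ) := by exact_mod_cast lt_of_lt_of_le one_pos hX1
  have hmpos : (0:ℝ) < (m:ℝ) := by exact_mod_cast hm
  have hmX : (m:ℝ) ≤ (X:ℝ) := by exact_mod_cast hXm
  obtain ⟨Y, hY⟩ : ∃ Y, X = Y+1 := ⟨X-1, by omega⟩
  set A : ℕ → ℝ := fun n => (An c k n : ℝ) with hA
  have hA0 : A 0 = 0 := by simp [hA, An_zero hc1]
  set term : ℕ → ℝ := fun n : ℕ =>
      ((q * f n + f n * g (⌊(n : ℝ) / c⌋ + k + 1) : ℤ) : ℝ) with hterm_def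
  have hterm : ∀ x : ℕ, term (x+1) = A (x+1) - A x := by
    intro x
    have h := termEq hc1 q hq k f g hf hg x
    simp only [hterm_def, hA]
    exact_mod_cast congrArg ((Int.cast : ℤ → ℝ)) h
  have hsum1 : ∑ n ∈ Finset.Icc 1 X, term n / (n:ℝ)
      = A X/(X:ℝ) + ∑ n ∈ Icc 1 Y, A n/((n:ℝ)*((n:ℝ)+1)) := by
    rw [hY, abel_aux A term hA0 hterm Y]
    norm_cast
  have hmid : ∑ n ∈ Icc 1 Y, A n/((n:ℝ)*((n:ℝ)+1))
      = (harmonic Y:ℝ)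
        + Int.fract (Int.fract c * ((k:ℝ)+1)) * (1 - 1/((1:ℝ)+(Y:ℝ)))
        - ∑ i ∈ range Y, t i := by
    have step : ∀ n ∈ Icc 1 Y, A n/((n:ℝ)*((n:ℝ)+1))
        = 1/(n:ℝ) + Int.fract (Int.fract c * ((k:ℝ)+1)) * (1/((n:ℝ)*((n:ℝ)+1)))
          - Bn c k n/((n:ℝ)*((n:ℝ)+1)) := by
      intro n hn
      have hn1 : 1 ≤ n := (Finset.mem_Icc.mp hn).1
      have hnp : (0:ℝ) < (n:ℝ) := by exact_mod_cast hn1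
      have hnp1 : (0:ℝ) < (n:ℝ)+1 := by linarith
      simp only [hA]
      rw [An_eq hc0 k n]
      field_simp
    rw [Finset.sum_congr rfl step, Finset.sum_sub_distrib, Finset.sum_add_distrib,
      ← Finset.mul_sum]
    have p1 : ∑ n ∈ Icc 1 Y, 1/(n:ℝ) = (harmonic Y:ℝ) := harmonic_eq Y
    have p2 : ∑ n ∈ Icc 1 Y, 1/((n:ℝ)*((n:ℝ)+1)) = 1 - 1/((1:ℝ)+(Y:ℝ)) := by
      rw [sum_Icc_one (fun n => 1/((n:ℝ)*((n:ℝ)+1))) Y]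
      have hcongr : ∀ i ∈ range Y, (1:ℝ)/(((i+1:ℕ):ℝ)*(((i+1:ℕ):ℝ)+1))
          = 1/(((i:ℝ)+1)*((i:ℝ)+1+1)) := by
        intro i _; push_cast; ring_nf
      rw [Finset.sum_congr rfl hcongr, tele 1 le_rfl Y]
      norm_num
    have p3 : ∑ n ∈ Icc 1 Y, Bn c k n/((n:ℝ)*((n:ℝ)+1)) = ∑ i ∈ range Y, t i := by
      rw [sum_Icc_one (fun n => Bn c k n/((n:ℝ)*((n:ℝ)+1))) Y]
      apply Finset.sum_congr rfl
      intro i _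
      rw [hteq i]
      push_cast
      ring_nf
    rw [p1, p2, p3]
  have hts : ∑' n, t n = ∑ i ∈ range Y, t i + ∑' n, t (n + Y) :=
    (Summable.sum_add_tsum_nat_add Y hsum).symm
  have htailnn : 0 ≤ ∑' n, t (n + Y) := tsum_nonneg (fun n => htnn _)
  have htail : ∑' n, t (n + Y) ≤ (c+1) * (1/(X:ℝ)) := by
    apply Real.tsum_le_of_sum_range_le (fun n => htnn _)
    intro j
    calc ∑ i ∈ range j, t (i+Y)
        ≤ ∑ i ∈ range j, (c+1) * (1/(((i:ℝ)+(X:ℝ))*((i:ℝ)+(X:ℝ)+1))) := by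
          apply Finset.sum_le_sum
          intro i _
          have hle := htle (i+Y)
          have hc2 : (((i+Y:ℕ)):ℝ)+1 = (i:ℝ)+(X:ℝ) := by
            rw [hY]; push_cast; ring
          rw [hc2] at hle
          exact hle
      _ ≤ (c+1) * (1/(X:ℝ)) := hpartial j (X:ℝ) (by exact_mod_cast hX1)
  have hharm := harm_bound X hX1
  have hharmY : (harmonic Y:ℝ) = (harmonic X:ℝ) - 1/(X:ℝ) := by
    rw [hY, harmonic_succ]
    push_cast
    ring
  have hlog : |Real.log X - Real.log m - Real.log c| ≤ 1/(m:ℝ) := by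
    have hlmc : Real.log m + Real.log c = Real.log ((m:ℝ)*c) :=
      (Real.log_mul (ne_of_gt hmpos) (ne_of_gt hc0)).symm
    have h1 : Real.log X ≤ Real.log ((m:ℝ)*c) := Real.log_le_log hXpos hXc
    have h2 : Real.log ((m:ℝ)*c) - Real.log X ≤ 1/(m:ℝ) := by
      rw [← Real.log_div (by positivity) (ne_of_gt hXpos)]
      have h3 := Real.log_le_sub_one_of_pos (show (0:ℝ) < (m:ℝ)*c/(X:ℝ) by positivity)
      have h4 : (m:ℝ)*c/(X:ℝ) - 1 ≤ 1/(m:ℝ) := by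
        rw [div_sub_one (ne_of_gt hXpos), div_le_div_iff₀ hXpos hmpos]
        nlinarith
      linarith
    rw [abs_le]
    constructor <;> linarith
  have hAX : A X = (X:ℝ) + 1 + Int.fract (Int.fract c * ((k:ℝ)+1)) - Bn c k X := by
    simp only [hA]; exact An_eq hc0 k X
  have key : (∑ n ∈ Finset.Icc 1 X, term n / (n:ℝ))
      - (1 + Real.log m + Real.log c + Real.eulerMascheroniConstant
          + Int.fract (Int.fract c * ((k:ℝ)+1)) - ∑' n, t n)
      = -(Bn c k X)/(X:ℝ)
        + ((harmonic X:ℝ) - Real.log X - Real.eulerMascheroniConstant)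
        + (Real.log X - Real.log m - Real.log c) + ∑' n, t (n+Y) := by
    rw [hsum1, hmid, hharmY, hts, hAX]
    have h1Y : (1:ℝ)+(Y:ℝ) = (X:ℝ) := by rw [hY]; push_cast; ring
    rw [h1Y]
    field_simp
    ring
  rw [key]
  have b1 : |(-(Bn c k X)/(X:ℝ))| ≤ (c+1)/(m:ℝ) := by
    rw [abs_div, abs_neg, abs_of_nonneg (hBnn X), abs_of_nonneg (le_of_lt hXpos)]
    calc Bn c k X/(X:ℝ) ≤ (c+1)/(X:ℝ) :=
          div_le_div_of_nonneg_right (hBle X) (le_of_lt hXpos)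
      _ ≤ (c+1)/(m:ℝ) := div_le_div_of_nonneg_left hc1' hmpos hmX
  have b2 : |(harmonic X:ℝ) - Real.log X - Real.eulerMascheroniConstant| ≤ 1/(m:ℝ) :=
    hharm.trans (one_div_le_one_div_of_le hmpos hmX)
  have b4 : |∑' n, t (n+Y)| ≤ (c+1)/(m:ℝ) := by
    rw [abs_of_nonneg htailnn]
    calc ∑' n, t (n+Y) ≤ (c+1) * (1/(X:ℝ)) := htail
      _ = (c+1)/(X:ℝ) := by rw [mul_one_div]
      _ ≤ (c+1)/(m:ℝ) := div_le_div_of_nonneg_left hc1' hmpos hmX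
  have hfin : (c+1)/(m:ℝ) + 1/(m:ℝ) + 1/(m:ℝ) + (c+1)/(m:ℝ) = (2*c+4)/(m:ℝ) := by
    field_simp
    ring
  calc |(-(Bn c k X)/(X:ℝ))
        + ((harmonic X:ℝ) - Real.log X - Real.eulerMascheroniConstant)
        + (Real.log X - Real.log m - Real.log c) + ∑' n, t (n+Y)|
      ≤ |(-(Bn c k X)/(X:ℝ))
        + ((harmonic X:ℝ) - Real.log X - Real.eulerMascheroniConstant)
        + (Real.log X - Real.log m - Real.log c)| + |∑' n, t (n+Y)| := abs_add_le _ _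
    _ ≤ (|(-(Bn c k X)/(X:ℝ))
        + ((harmonic X:ℝ) - Real.log X - Real.eulerMascheroniConstant)|
        + |Real.log X - Real.log m - Real.log c|) + |∑' n, t (n+Y)| := by
          gcongr
          exact abs_add_le _ _
    _ ≤ ((|(-(Bn c k X)/(X:ℝ))|
        + |(harmonic X:ℝ) - Real.log X - Real.eulerMascheroniConstant|)
        + |Real.log X - Real.log m - Real.log c|) + |∑' n, t (n+Y)| := by
          gcongr
          exact abs_add_le _ _
    _ ≤ (((c+1)/(m:ℝ) + 1/(m:ℝ)) + 1/(m:ℝ)) + (c+1)/(m:ℝ) := by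
          gcongr
    _ = (2*c+4)/(m:ℝ) := by linarith [hfin]
end

section
/- Let a and b be irrational real numbers with 1 < a < b and equal fractional parts θ = {a} = {b}, and set a_n = ⌊a·n⌋ and b_n = ⌊b·n⌋ for positive integers n. Then for every positive integer n, the inequality a_{n+1}/a_n − b_{n+1}/b_n > 0 holds if and only if n belongs to the Beatty sequence with slope 1/θ, i.e. if and only if n = ⌊k/θ⌋ for some positive integer k. -/
set_option maxHeartbeats 800000

/-- For irrational `a, b` with `1 < a < b` and equal fractional parts
`θ = {a} = {b}`, with `aₙ = ⌊a·n⌋`, `bₙ = ⌊b·n⌋`: for every positive integer `n`,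
`a_{n+1}/aₙ − b_{n+1}/bₙ > 0` if and only if `n = ⌊k/θ⌋` for some positive integer `k`. -/
theorem stmt19 (a b θ : ℝ) (ha : Irrational a) (hb : Irrational b)
    (ha1 : 1 < a) (hab : a < b) (hθa : θ = Int.fract a) (hθb : θ = Int.fract b)
    (n : ℕ) (hn : 0 < n) :
    (⌊a * ((n : ℝ) + 1)⌋ : ℝ) / (⌊a * (n : ℝ)⌋ : ℝ)
        - (⌊b * ((n : ℝ) + 1)⌋ : ℝ) / (⌊b * (n : ℝ)⌋ : ℝ) > 0
      ↔ ∃ k : ℕ, 0 < k ∧ (n : ℤ) = ⌊(k : ℝ) / θ⌋ := by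
  set A : ℤ := ⌊a⌋ with hA
  set B : ℤ := ⌊b⌋ with hB
  have haA : a = (A : ℝ) + θ := by rw [hθa, Int.fract]; ring
  have hbB : b = (B : ℝ) + θ := by rw [hθb, Int.fract]; ring
  have hθ : Irrational θ := by
    rw [hθa, Int.fract]
    exact ha.sub_intCast ⌊a⌋
  have hθ0 : 0 < θ := lt_of_le_of_ne (hθa ▸ Int.fract_nonneg a) (Ne.symm hθ.ne_zero)
  have hθ1 : θ < 1 := hθa ▸ Int.fract_lt_one a
  have hA1 : 1 ≤ A := Int.le_floor.mpr (by exact_mod_cast ha1.le)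
  have hAB : A < B := by
    have : (A : ℝ) < (B : ℝ) := by linarith [haA ▸ hbB ▸ hab]
    exact_mod_cast this
  set m : ℤ := ⌊θ * (n : ℝ)⌋ with hm
  set m' : ℤ := ⌊θ * ((n : ℝ) + 1)⌋ with hm'
  have e1 : ⌊a * (n : ℝ)⌋ = A * n + m := by
    rw [haA, show ((A : ℝ) + θ) * n = θ * n + ((A * n : ℤ) : ℝ) by push_cast; ring,
      Int.floor_add_intCast]
    ring
  have e2 : ⌊a * ((n : ℝ) + 1)⌋ = A * (n + 1) + m' := by
    rw [haA, show ((A : ℝ) + θ) * ((n:ℝ) + 1) = θ * ((n:ℝ) + 1) + ((A * (n + 1) : ℤ) : ℝ) by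
      push_cast; ring, Int.floor_add_intCast]
    ring
  have e3 : ⌊b * (n : ℝ)⌋ = B * n + m := by
    rw [hbB, show ((B : ℝ) + θ) * n = θ * n + ((B * n : ℤ) : ℝ) by push_cast; ring,
      Int.floor_add_intCast]
    ring
  have e4 : ⌊b * ((n : ℝ) + 1)⌋ = B * (n + 1) + m' := by
    rw [hbB, show ((B : ℝ) + θ) * ((n:ℝ) + 1) = θ * ((n:ℝ) + 1) + ((B * (n + 1) : ℤ) : ℝ) by
      push_cast; ring, Int.floor_add_intCast]
    ring
  have hm0 : 0 ≤ m := Int.floor_nonneg.mpr (by positivity)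
  have hmn : m < (n : ℤ) := by
    have h1 : (m : ℝ) ≤ θ * n := Int.floor_le _
    have h2 : θ * n < n := by
      have : (0:ℝ) < n := by exact_mod_cast hn
      nlinarith
    exact_mod_cast h1.trans_lt h2
  have hmm'1 : m ≤ m' := Int.floor_le_floor (by nlinarith)
  have hmm'2 : m' ≤ m + 1 := by
    have h : θ * ((n : ℝ) + 1) ≤ θ * (n : ℝ) + 1 := by nlinarith
    calc m' ≤ ⌊θ * (n : ℝ) + 1⌋ := Int.floor_le_floor h
      _ = m + 1 := Int.floor_add_one _
  -- irrationality facts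
  have hirr_n : Irrational (θ * (n : ℝ)) := hθ.mul_natCast (by omega)
  have hirr_n1 : Irrational (θ * ((n : ℝ) + 1)) := by
    have := hθ.mul_natCast (m := n + 1) (by omega)
    have h2 : θ * ((n + 1 : ℕ) : ℝ) = θ * ((n : ℝ) + 1) := by push_cast; ring
    rwa [h2] at this
  have hmlt : (m : ℝ) < θ * n := (Int.floor_le _).lt_of_ne (fun h => hirr_n ⟨m, h⟩)
  have hm'lt : (m' : ℝ) < θ * ((n : ℝ) + 1) :=
    (Int.floor_le _).lt_of_ne (fun h => hirr_n1 ⟨m', h⟩)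
  -- positivity of denominators
  have hn1 : (1:ℤ) ≤ (n:ℤ) := by omega
  have hPz : 0 < A * n + m := by nlinarith [mul_pos (show (0:ℤ) < A by omega) (show (0:ℤ) < (n:ℤ) by omega)]
  have hQz : 0 < B * n + m := by nlinarith [mul_pos (show (0:ℤ) < B by omega) (show (0:ℤ) < (n:ℤ) by omega)]
  have hP : (0:ℝ) < ((A * n + m : ℤ) : ℝ) := by exact_mod_cast hPz
  have hQ : (0:ℝ) < ((B * n + m : ℤ) : ℝ) := by exact_mod_cast hQz
  clear_value A B m m'
  rw [e1, e2, e3, e4]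
  rw [gt_iff_lt, sub_pos, div_lt_div_iff₀ hQ hP]
  have key : (((B * (n + 1) + m' : ℤ) : ℝ)) * ((A * n + m : ℤ) : ℝ)
      < ((A * (n + 1) + m' : ℤ) : ℝ) * ((B * n + m : ℤ) : ℝ)
      ↔ (B * (n + 1) + m') * (A * n + m) < (A * (n + 1) + m') * (B * n + m) := by
    exact_mod_cast Iff.rfl
  rw [key]
  constructor
  · intro h
    have hm'eq : m' = m + 1 := by
      rcases (by omega : m' = m ∨ m' = m + 1) with h0 | h1
      · exfalso
        rw [h0] at h
        nlinarith [hAB, hm0, hn1]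
      · exact h1
    refine ⟨(m + 1).toNat, by omega, ?_⟩
    have hk : (((m + 1).toNat : ℤ) : ℝ) = (m : ℝ) + 1 := by
      rw [Int.toNat_of_nonneg (by omega)]; push_cast; ring
    have hkr : (((m + 1).toNat : ℕ) : ℝ) = (m : ℝ) + 1 := by exact_mod_cast hk
    rw [hkr]
    symm
    rw [Int.floor_eq_iff]
    constructor
    · rw [le_div_iff₀ hθ0]
      push_cast
      have := Int.lt_floor_add_one (θ * (n : ℝ))
      rw [← hm] at this
      nlinarith
    · rw [div_lt_iff₀ hθ0]
      push_cast
      have : (m' : ℝ) < θ * ((n : ℝ) + 1) := hm'lt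
      rw [hm'eq] at this
      push_cast at this
      nlinarith
  · rintro ⟨k, hk0, hkfl⟩
    have hfl := hkfl.symm
    have h1 : (n : ℝ) ≤ (k : ℝ) / θ := by
      have := Int.floor_le ((k : ℝ) / θ)
      rw [hfl] at this
      exact_mod_cast this
    have h2 : (k : ℝ) / θ < (n : ℝ) + 1 := by
      have := Int.lt_floor_add_one ((k : ℝ) / θ)
      rw [hfl] at this
      push_cast at this
      exact_mod_cast this
    have h1' : θ * n ≤ (k : ℝ) := by
      rw [le_div_iff₀ hθ0] at h1
      linarith [h1]
    have h2' : (k : ℝ) < θ * ((n : ℝ) + 1) := by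
      rw [div_lt_iff₀ hθ0] at h2
      linarith [h2]
    have hmk : m < (k : ℤ) := by
      have : (m : ℝ) < (k : ℝ) := lt_of_lt_of_le hmlt h1'
      exact_mod_cast this
    have hkm' : (k : ℤ) ≤ m' := by
      rw [hm']
      exact Int.le_floor.mpr (by push_cast; exact_mod_cast h2'.le)
    have hm'eq : m' = m + 1 := by omega
    rw [hm'eq]
    have hkey : 0 < (B - A) * ((n : ℤ) - m) := mul_pos (by omega) (by omega)
    have expand : (A * ((n:ℤ) + 1) + (m + 1)) * (B * (n:ℤ) + m)
        - (B * ((n:ℤ) + 1) + (m + 1)) * (A * (n:ℤ) + m) = (B - A) * ((n:ℤ) - m) := by ring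
    linarith [hkey, expand]
end
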